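/- arXiv:2008.05121 — 5 statements merged into one kernel-verified Lean document; each statement's English description precedes it below -/
import Mathlib

section
/- Let p ≥ 2 be an integer and α ≥ 0 a real number with α ∈ ℤ≥0 ∪ [p−2, ∞). Then the function Ω(x)^α is TN_p, i.e., the Toeplitz kernel (x,y) ↦ Ω(x−y)^α on ℝ × ℝ is totally non-negative of order p. -/
/-!
Since `Ω(t) ^ α = e ^ (-α t) t₊ ^ α` and `e ^ (-α (x - y)) = e ^ (-α x) e ^ (α y)` only rescales
rows and columns, it suffices to show that the minors of the truncated-power kernel
`(x - y)₊ ^ α` are nonnegative.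

For real `α > r - 2`, an `r × r` minor has a vanishing upper-right corner, hence vanishes, unless
`y j < x j` for all `j`. On that convex set of nodes it never vanishes, by induction on `r`: if
`x j ≤ y (j + 1)` for some `j`, the system `∑ₖ cₖ (xⱼ - yₖ)₊ ^ α = 0` is block triangular;
otherwise the nodes interlace, and Rolle's theorem applied to `(t - y₀) ^ (-α) ∑ₖ cₖ (t - yₖ)₊ ^ α`
between consecutive `xⱼ` gives a system of order `α - 1` and size `r - 1` in the coefficients
`cₖ (yₖ - y₀)`. As the minor is positive at a triangular configuration, it is positive on the
whole set.

For `α = n ∈ ℕ`, the kernel is the limit of `n! / D ^ n · C(⌊D x⌋ - ⌊D y⌋ - 1, n)` as `D → ∞`.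
The integer kernel `C(a - b - 1, n)` is the `(n + 1)`-fold composition of the Heaviside kernel
`[b < a]`, whose minors are nonnegative, so the Cauchy–Binet formula gives nonnegative minors.

For `r ≤ p`, the hypothesis `p - 2 ≤ α` leaves only `α > r - 2` or `α = p - 2 ∈ ℕ`.
-/

open Matrix Set Filter

/-- Real power with the convention `0 ^ α := 0` (including `0 ^ 0 := 0`). -/
noncomputable def pow0 (x α : ℝ) : ℝ := if x = 0 then 0 else x ^ α

/-- A kernel `K` is totally non-negative of order `p` on `X × Y`. -/
def TNpKer (p : ℕ) (X Y : Set ℝ) (K : ℝ → ℝ → ℝ) : Prop :=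
  ∀ r : ℕ, 1 ≤ r → r ≤ p → ∀ x y : Fin r → ℝ,
    StrictMono x → StrictMono y → (∀ j, x j ∈ X) → (∀ j, y j ∈ Y) →
      0 ≤ (Matrix.of fun j k => K (x j) (y k)).det

/-- Karlin's kernel `Ω(x) = x e^{-x}` for `x > 0`, else `0`. -/
noncomputable def Omega (x : ℝ) : ℝ := if 0 < x then x * Real.exp (-x) else 0

open Topology
open scoped Nat

noncomputable def truncPow (α u : ℝ) : ℝ := if 0 < u then u ^ α else 0

section TruncPow

variable {α u : ℝ}

lemma truncPow_of_pos (h : 0 < u) (α : ℝ) : truncPow α u = u ^ α := if_pos h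

lemma truncPow_of_nonpos (h : u ≤ 0) (α : ℝ) : truncPow α u = 0 := if_neg h.not_gt

lemma truncPow_pos (h : 0 < u) (α : ℝ) : 0 < truncPow α u := by
  rw [truncPow_of_pos h]
  exact Real.rpow_pos_of_pos h α

lemma truncPow_eq_truncPow_sub_one_mul (α u : ℝ) : truncPow α u = truncPow (α - 1) u * u := by
  rcases lt_or_ge 0 u with h | h
  · rw [truncPow_of_pos h, truncPow_of_pos h, Real.rpow_sub_one h.ne', div_mul_cancel₀ _ h.ne']
  · rw [truncPow_of_nonpos h, truncPow_of_nonpos h, zero_mul]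

lemma truncPow_eq_max_rpow (hα : 0 < α) (u : ℝ) : truncPow α u = max u 0 ^ α := by
  rcases lt_or_ge 0 u with h | h
  · rw [truncPow_of_pos h, max_eq_left h.le]
  · rw [truncPow_of_nonpos h, max_eq_right h, Real.zero_rpow hα.ne']

lemma continuous_truncPow (hα : 0 < α) : Continuous (truncPow α) := by
  simp_rw [funext (truncPow_eq_max_rpow hα)]
  exact (continuous_id.max continuous_const).rpow_const fun _ => Or.inr hα.le

lemma hasDerivAt_truncPow (h : 1 < α ∨ u ≠ 0) :
    HasDerivAt (truncPow α) (α * truncPow (α - 1) u) u := by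
  rcases lt_trichotomy u 0 with hu | rfl | hu
  · rw [truncPow_of_nonpos hu.le, mul_zero]
    refine (hasDerivAt_const u 0).congr_of_eventuallyEq ?_
    filter_upwards [Iio_mem_nhds hu] with v hv using truncPow_of_nonpos hv.le α
  · have hα : 1 < α := h.resolve_right (not_not.2 rfl)
    rw [truncPow_of_nonpos le_rfl, mul_zero]
    have hleft : HasDerivWithinAt (truncPow α) 0 (Iic 0) 0 :=
      (hasDerivWithinAt_const 0 _ 0).congr (fun v hv => truncPow_of_nonpos hv α)
        (truncPow_of_nonpos le_rfl α)
    have hright : HasDerivWithinAt (truncPow α) 0 (Ici 0) 0 := by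
      have := Real.hasDerivAt_rpow_const (x := 0) (p := α) (Or.inr hα.le)
      rw [Real.zero_rpow (by linarith), mul_zero] at this
      refine this.hasDerivWithinAt.congr (fun v hv => ?_) ?_
      · rcases (mem_Ici.1 hv).eq_or_lt with rfl | hv
        · rw [truncPow_of_nonpos le_rfl, Real.zero_rpow (by linarith)]
        · exact truncPow_of_pos hv α
      · rw [truncPow_of_nonpos le_rfl, Real.zero_rpow (by linarith)]
    simpa using hleft.union hright
  · rw [truncPow_of_pos hu]
    refine ((Real.hasDerivAt_rpow_const (Or.inl hu.ne')).congr_of_eventuallyEq ?_)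
    filter_upwards [Ioi_mem_nhds hu] with v hv using truncPow_of_pos hv α

end TruncPow

namespace Matrix

variable {R κ : Type*} [CommRing R] {r : ℕ}

lemma det_eq_zero_of_zero_corner {M : Matrix (Fin r) (Fin r) R}
    (j₀ : Fin r) (h : ∀ i k, i ≤ j₀ → j₀ ≤ k → M i k = 0) : M.det = 0 := by
  rw [det_apply']
  refine Finset.sum_eq_zero fun σ _ => ?_
  obtain ⟨i, hi, hσi⟩ : ∃ i, j₀ ≤ i ∧ σ i ≤ j₀ := by
    by_contra! hσ
    have hcard := Finset.card_le_card_of_injOn σ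
      (fun i hi => Finset.mem_Ioi.2 (hσ i (Finset.mem_Ici.1 hi))) σ.injective.injOn
    rw [Fin.card_Ici, Fin.card_Ioi] at hcard
    omega
  exact mul_eq_zero_of_right _ (Finset.prod_eq_zero (Finset.mem_univ i) (h _ _ hσi hi))

variable [Fintype κ]

lemma det_mul_eq_sum_prod_mul_det_submatrix (A : Matrix (Fin r) κ R) (B : Matrix κ (Fin r) R) :
    (A * B).det = ∑ f : Fin r → κ, (∏ i, A i (f i)) * (B.submatrix f id).det := by
  have hrows : A * B = fun i => ∑ c, A i c • B c := by
    ext i k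
    simp [mul_apply, Finset.sum_apply]
  change detRowAlternating (A * B) = _
  rw [hrows, ← AlternatingMap.coe_multilinearMap, MultilinearMap.map_sum]
  refine Finset.sum_congr rfl fun f _ => ?_
  rw [MultilinearMap.map_smul_univ, smul_eq_mul]
  rfl

variable [LinearOrder κ]

open Classical in
lemma sum_injective_eq_sum_strictMono_sum_perm {M : Type*} [AddCommMonoid M] (F : (Fin r → κ) → M) :
    ∑ f : Fin r → κ with f.Injective, F f =
      ∑ g : Fin r → κ with StrictMono g, ∑ σ : Equiv.Perm (Fin r), F (g ∘ σ) := by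
  rw [← Finset.sum_product']
  symm
  refine Finset.sum_nbij' (fun p => p.1 ∘ p.2)
    (fun f : Fin r → κ => (f ∘ Tuple.sort f, (Tuple.sort f)⁻¹)) ?_ ?_ ?_ ?_ fun _ _ => rfl
  · simp only [Finset.mem_product, Finset.mem_filter_univ, Finset.mem_univ, and_true]
    exact fun p hp => hp.injective.comp p.2.injective
  · simp only [Finset.mem_product, Finset.mem_filter_univ, Finset.mem_univ, and_true]
    exact fun f hf =>
      (Tuple.monotone_sort f).strictMono_of_injective (hf.comp (Tuple.sort f).injective)
  · simp only [Finset.mem_product, Finset.mem_filter_univ, Finset.mem_univ, and_true]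
    rintro ⟨g, σ⟩ hg
    have hsorted : (g ∘ σ) ∘ Tuple.sort (g ∘ σ) = g := by
      rw [Tuple.comp_perm_comp_sort_eq_comp_sort, Tuple.sort_eq_refl_iff_monotone.2 hg.monotone]
      rfl
    refine Prod.ext hsorted (Equiv.ext fun i => hg.injective ?_)
    simpa using (congrFun hsorted ((Tuple.sort (g ∘ σ))⁻¹ i)).symm
  · intro f _
    ext i
    simp

open Classical in
theorem det_mul_eq_sum_strictMono (A : Matrix (Fin r) κ R) (B : Matrix κ (Fin r) R) :
    (A * B).det =
      ∑ g : Fin r → κ with StrictMono g, (A.submatrix id g).det * (B.submatrix g id).det := by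
  rw [det_mul_eq_sum_prod_mul_det_submatrix, ← Finset.sum_filter_of_ne (p := Function.Injective),
    sum_injective_eq_sum_strictMono_sum_perm]
  · refine Finset.sum_congr rfl fun g _ => ?_
    rw [← det_transpose, det_apply', Finset.sum_mul]
    refine Finset.sum_congr rfl fun σ _ => ?_
    rw [show B.submatrix (g ∘ σ) id = (B.submatrix g id).submatrix σ id from rfl, det_permute]
    simp only [transpose_apply, submatrix_apply, id, Function.comp_apply]
    ring
  · intro f _ hf
    by_contra hinj
    obtain ⟨i, j, hij, hne⟩ : ∃ i j, f i = f j ∧ i ≠ j := by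
      simpa [Function.Injective, not_forall] using hinj
    exact hf (by rw [det_zero_of_row_eq hne (by ext; simp [hij]), mul_zero])

end Matrix

lemma det_heaviside_nonneg {β : Type*} [LinearOrder β] {r : ℕ} (a t : Fin r → β)
    (ha : Monotone a) (ht : Monotone t) :
    0 ≤ (of fun j i => if t i < a j then (1 : ℝ) else 0).det := by
  induction r with
  | zero => simp
  | succ s ih =>
    by_cases h₀ : a 0 ≤ t 0
    · refine (det_eq_zero_of_row_eq_zero 0 fun i => if_neg ?_).ge
      exact not_lt.2 (h₀.trans (ht (Fin.zero_le i)))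
    by_cases h₁ : ∃ i ≠ 0, t i < a 0
    · -- columns `0` and `i` are identically `1`
      obtain ⟨i, hi, hti⟩ := h₁
      refine (det_zero_of_column_eq hi.symm fun j => ?_).ge
      have hj : a 0 ≤ a j := ha (Fin.zero_le j)
      simp only [of_apply, if_pos (hti.trans_le hj),
        if_pos ((ht (Fin.zero_le i)).trans_lt (hti.trans_le hj))]
    · -- row `0` is the first unit vector
      push Not at h₀ h₁
      rw [det_succ_row_zero, Fin.sum_univ_succ, Fin.succAbove_zero, Finset.sum_eq_zero fun i _ => by
        simp [not_lt.2 (h₁ i.succ (Fin.succ_ne_zero i))], add_zero]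
      simp only [Fin.val_zero, pow_zero, one_mul, of_apply, if_pos h₀]
      exact ih (a ∘ Fin.succ) (t ∘ Fin.succ) (ha.comp Fin.strictMono_succ.monotone)
        (ht.comp Fin.strictMono_succ.monotone)

lemma exists_sum_mul_truncPow_eq_zero_of_roots {ι : Type*} {s : Finset ι} {c y : ι → ℝ}
    {α a b y₀ : ℝ} (hα : 0 < α) (hab : a < b) (hy₀ : y₀ < a) (hreg : 1 < α ∨ ∀ k ∈ s, y k < a)
    (ha : ∑ k ∈ s, c k * truncPow α (a - y k) = 0)
    (hb : ∑ k ∈ s, c k * truncPow α (b - y k) = 0) :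
    ∃ ξ ∈ Ioo a b, ∑ k ∈ s, c k * ((y k - y₀) * truncPow (α - 1) (ξ - y k)) = 0 := by
  -- Dividing by `(t - y₀) ^ α` turns the derivative into a truncated-power sum of order `α - 1`.
  set F : ℝ → ℝ := fun t => (∑ k ∈ s, c k * truncPow α (t - y k)) * (t - y₀) ^ (-α)
  have hF : ∀ t ∈ Icc a b, HasDerivAt F
      (α * (t - y₀) ^ (-α - 1) * ∑ k ∈ s, c k * ((y k - y₀) * truncPow (α - 1) (t - y k))) t := by
    intro t ht
    have ht₀ : 0 < t - y₀ := by linarith [ht.1]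
    have hsum := HasDerivAt.fun_sum (u := s) fun k hk =>
      ((hasDerivAt_truncPow (hreg.imp_right fun h => (sub_pos.2 ((h k hk).trans_le ht.1)).ne'))
        |>.comp_sub_const t (y k)).const_mul (c k)
    have hpow := ((Real.hasDerivAt_rpow_const (p := -α) (Or.inl ht₀.ne')).comp_sub_const t y₀)
    refine (hsum.mul hpow).congr_deriv ?_
    rw [show (t - y₀) ^ (-α) = (t - y₀) ^ (-α - 1) * (t - y₀) by
      rw [← Real.rpow_add_one ht₀.ne', sub_add_cancel]]
    simp only [Finset.mul_sum, Finset.sum_mul, ← Finset.sum_add_distrib]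
    refine Finset.sum_congr rfl fun k _ => ?_
    rw [truncPow_eq_truncPow_sub_one_mul α]
    ring
  obtain ⟨ξ, hξ, hF'⟩ := exists_hasDerivAt_eq_zero hab
    (fun t ht => (hF t ht).continuousAt.continuousWithinAt) (by simp [F, ha, hb])
    fun t ht => hF t (Ioo_subset_Icc_self ht)
  refine ⟨ξ, hξ, ?_⟩
  have hpos : 0 < α * (ξ - y₀) ^ (-α - 1) :=
    mul_pos hα (Real.rpow_pos_of_pos (by linarith [hξ.1]) _)
  exact (mul_eq_zero.1 hF').resolve_left hpos.ne'

/-- Nodes and coefficients are sequences, of which only the first `r` terms matter, so that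
subsystems are easy to extract. -/
def TruncPowUnisolvent (r : ℕ) (α : ℝ) : Prop :=
  ∀ ⦃x y c : ℕ → ℝ⦄, StrictMonoOn x (Set.Iio r) → StrictMonoOn y (Set.Iio r) →
    (∀ j < r, y j < x j) →
    (∀ j < r, ∑ k ∈ Finset.range r, c k * truncPow α (x j - y k) = 0) → ∀ k < r, c k = 0

lemma StrictMonoOn.comp_add_left {β : Type*} [Preorder β] {f : ℕ → β} {m n : ℕ}
    (hf : StrictMonoOn f (Set.Iio (m + n))) :
    StrictMonoOn (fun i => f (m + i)) (Set.Iio n) :=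
  fun i hi j hj hij => hf (show m + i < m + n by simp only [Set.mem_Iio] at hi; omega)
    (show m + j < m + n by simp only [Set.mem_Iio] at hj; omega) (by omega)

lemma eq_zero_of_split {α : ℝ} {j n : ℕ} (h₁ : TruncPowUnisolvent (j + 1) α)
    (h₂ : TruncPowUnisolvent n α) {x y c : ℕ → ℝ} (hx : StrictMonoOn x (Set.Iio (j + 1 + n)))
    (hy : StrictMonoOn y (Set.Iio (j + 1 + n))) (hxy : ∀ i < j + 1 + n, y i < x i)
    (hsplit : x j ≤ y (j + 1))
    (hc : ∀ i < j + 1 + n, ∑ k ∈ Finset.range (j + 1 + n), c k * truncPow α (x i - y k) = 0) :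
    ∀ k < j + 1 + n, c k = 0 := by
  have hlow : ∀ k < j + 1, c k = 0 := by
    refine h₁ (hx.mono (Set.Iio_subset_Iio (by omega))) (hy.mono (Set.Iio_subset_Iio (by omega)))
      (fun i hi => hxy i (by omega)) fun i hi => ?_
    have hzero : ∑ k ∈ Finset.range n, c (j + 1 + k) * truncPow α (x i - y (j + 1 + k)) = 0 :=
      Finset.sum_eq_zero fun k hk => by
        have hxi : x i ≤ x j := hx.monotoneOn (show i < j + 1 + n by omega)
          (show j < j + 1 + n by omega) (by omega)
        have hyk : y (j + 1) ≤ y (j + 1 + k) := hy.monotoneOn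
          (show j + 1 < j + 1 + n by simp at hk; omega)
          (show j + 1 + k < j + 1 + n by simp at hk; omega) (by omega)
        rw [truncPow_of_nonpos (by linarith), mul_zero]
    simpa [Finset.sum_range_add, hzero] using hc i (by omega)
  have hhigh : ∀ k < n, c (j + 1 + k) = 0 := by
    refine h₂ hx.comp_add_left hy.comp_add_left (fun i hi => hxy _ (by omega)) fun i hi => ?_
    have := hc (j + 1 + i) (by omega)
    rwa [Finset.sum_range_add, Finset.sum_eq_zero fun k hk => by
      rw [hlow k (Finset.mem_range.1 hk), zero_mul], zero_add] at this
  intro k hk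
  obtain hk' | hk' := lt_or_ge k (j + 1)
  · exact hlow k hk'
  · simpa [Nat.add_sub_cancel' hk'] using hhigh (k - (j + 1)) (by omega)

lemma exists_root_of_interlaced {α : ℝ} {s i : ℕ} (hα : (s + 1 : ℝ) - 2 < α) (hi : i < s)
    {x y c : ℕ → ℝ} (hx : StrictMonoOn x (Set.Iio (s + 1))) (hy : StrictMonoOn y (Set.Iio (s + 1)))
    (hxy : ∀ j < s + 1, y j < x j) (hint : ∀ j < s, y (j + 1) < x j)
    (hc : ∀ j < s + 1, ∑ k ∈ Finset.range (s + 1), c k * truncPow α (x j - y k) = 0) :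
    ∃ ξ ∈ Set.Ioo (x i) (x (i + 1)),
      ∑ k ∈ Finset.range (s + 1), c k * ((y k - y 0) * truncPow (α - 1) (ξ - y k)) = 0 := by
  have hs : (1 : ℝ) ≤ s := by exact_mod_cast (show 1 ≤ s by omega)
  have hreg : 1 < α ∨ ∀ k ∈ Finset.range (s + 1), y k < x i := by
    refine or_iff_not_imp_left.2 fun hα₁ k hk => ?_
    have hs2 : s < 2 := by exact_mod_cast (show (s : ℝ) < 2 by linarith [not_lt.1 hα₁])
    obtain rfl : s = 1 := by omega
    obtain rfl : i = 0 := by omega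
    have hk1 : y k ≤ y 1 := hy.monotoneOn (Finset.mem_range.1 hk) (show 1 < 2 by omega)
      (by simp at hk; omega)
    linarith [hint 0 (by omega)]
  have hy₀ : y 0 ≤ y i := hy.monotoneOn (show 0 < s + 1 by omega) (show i < s + 1 by omega)
    (Nat.zero_le i)
  exact exists_sum_mul_truncPow_eq_zero_of_roots (by linarith)
    (hx (show i < s + 1 by omega) (show i + 1 < s + 1 by omega) (by omega))
    (hy₀.trans_lt (hxy i (by omega))) hreg (hc i (by omega)) (hc (i + 1) (by omega))

lemma eq_zero_of_interlaced {α : ℝ} {s : ℕ} (hα : (s + 1 : ℝ) - 2 < α)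
    (ih : TruncPowUnisolvent s (α - 1)) {x y c : ℕ → ℝ} (hx : StrictMonoOn x (Set.Iio (s + 1)))
    (hy : StrictMonoOn y (Set.Iio (s + 1))) (hxy : ∀ j < s + 1, y j < x j)
    (hint : ∀ j < s, y (j + 1) < x j)
    (hc : ∀ j < s + 1, ∑ k ∈ Finset.range (s + 1), c k * truncPow α (x j - y k) = 0) :
    ∀ k < s + 1, c k = 0 := by
  have hroot : ∀ i, ∃ ξ, i < s → ξ ∈ Set.Ioo (x i) (x (i + 1)) ∧
      ∑ k ∈ Finset.range (s + 1), c k * ((y k - y 0) * truncPow (α - 1) (ξ - y k)) = 0 := by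
    intro i
    by_cases hi : i < s
    · obtain ⟨ξ, hξ, hG⟩ := exists_root_of_interlaced hα hi hx hy hxy hint hc
      exact ⟨ξ, fun _ => ⟨hξ, hG⟩⟩
    · exact ⟨0, fun h => absurd h hi⟩
  choose ξ hξ using hroot
  have htail : ∀ k < s, c (k + 1) * (y (k + 1) - y 0) = 0 := by
    refine ih (fun i hi j hj hij => ((hξ i hi).1.2.trans_le ?_).trans (hξ j hj).1.1)
      (fun i hi j hj hij => hy (show i + 1 < s + 1 by simp at hi; omega)
        (show j + 1 < s + 1 by simp at hj; omega) (by omega)) ?_ fun j hj => ?_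
    · exact hx.monotoneOn (show i + 1 < s + 1 by simp at hi; omega)
        (show j < s + 1 by simp at hj; omega) (by omega)
    · exact fun j hj => (hint j hj).trans (hξ j hj).1.1
    · have := (hξ j hj).2
      rw [Finset.sum_range_succ', sub_self, zero_mul, mul_zero, add_zero] at this
      simpa only [add_comm 1, mul_assoc] using this
  have htail' : ∀ k < s, c (k + 1) = 0 := fun k hk =>
    (mul_eq_zero.1 (htail k hk)).resolve_right
      (sub_ne_zero.2 (hy (show 0 < s + 1 by omega) (show k + 1 < s + 1 by omega) (by omega)).ne')
  have hc₀ : c 0 = 0 := by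
    have := hc 0 (by omega)
    rw [Finset.sum_range_succ', Finset.sum_eq_zero fun k hk => by
      rw [htail' k (Finset.mem_range.1 hk), zero_mul], zero_add] at this
    exact (mul_eq_zero.1 this).resolve_right (truncPow_pos (sub_pos.2 (hxy 0 (by omega))) α).ne'
  rintro (_ | k) hk
  · exact hc₀
  · exact htail' k (by omega)

lemma truncPowUnisolvent {r : ℕ} {α : ℝ} (hα : (r : ℝ) - 2 < α) : TruncPowUnisolvent r α := by
  induction r using Nat.strong_induction_on generalizing α with
  | _ r ih =>
  intro x y c hx hy hxy hc
  by_cases hsplit : ∃ j, j + 1 < r ∧ x j ≤ y (j + 1)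
  · obtain ⟨j, hj, hsplit⟩ := hsplit
    obtain ⟨n, rfl⟩ : ∃ n, r = j + 1 + n := ⟨r - (j + 1), by omega⟩
    push_cast at hα
    exact eq_zero_of_split (ih _ (by omega) (by push_cast; linarith [(n.cast_nonneg : (0:ℝ) ≤ n)]))
      (ih n (by omega) (by linarith [(j.cast_nonneg : (0:ℝ) ≤ j)])) hx hy hxy hsplit hc
  · obtain _ | s := r
    · intro k hk
      omega
    · push_cast at hα
      exact eq_zero_of_interlaced hα (ih s (by omega) (by linarith)) hx hy hxy
        (fun j hj => lt_of_not_ge fun h => hsplit ⟨j, by omega, h⟩) hc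

lemma det_truncPow_ne_zero {r : ℕ} {α : ℝ} (hα : (r : ℝ) - 2 < α) {x y : Fin r → ℝ}
    (hx : StrictMono x) (hy : StrictMono y) (hxy : ∀ j, y j < x j) :
    (of fun j k => truncPow α (x j - y k)).det ≠ 0 := by
  intro h
  obtain ⟨v, hv, hMv⟩ := exists_mulVec_eq_zero_iff.2 h
  let seq (f : Fin r → ℝ) (i : ℕ) : ℝ := if hi : i < r then f ⟨i, hi⟩ else 0
  have seq_strictMonoOn {f : Fin r → ℝ} (hf : StrictMono f) : StrictMonoOn (seq f) (Set.Iio r) :=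
    fun i hi j hj hij => by
      simp only [seq, dif_pos (show i < r from hi), dif_pos (show j < r from hj)]
      exact hf hij
  have key := truncPowUnisolvent hα (seq_strictMonoOn hx) (seq_strictMonoOn hy)
    (fun j hj => by simpa [seq, hj] using hxy ⟨j, hj⟩) (c := seq v) fun j hj => by
      rw [← Fin.sum_univ_eq_sum_range (fun k => seq v k * truncPow α (seq x j - seq y k))]
      simpa [seq, hj, mulVec, dotProduct, mul_comm] using congrFun hMv ⟨j, hj⟩
  exact hv (funext fun k => by simpa [seq] using key k k.isLt)

lemma det_truncPow_pos_of_le {r : ℕ} {α : ℝ} {x y : Fin r → ℝ} (hxy : ∀ j, y j < x j)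
    (hle : ∀ j k, j < k → x j ≤ y k) : 0 < (of fun j k => truncPow α (x j - y k)).det := by
  rw [det_of_isLowerTriangular (of fun j k => truncPow α (x j - y k)) fun j k hjk =>
    truncPow_of_nonpos (sub_nonpos.2 (hle j k hjk)) α]
  exact Finset.prod_pos fun j _ => truncPow_pos (sub_pos.2 (hxy j)) α

lemma convex_setOf_strictMono_lt (r : ℕ) :
    Convex ℝ {p : (Fin r → ℝ) × (Fin r → ℝ) |
      StrictMono p.1 ∧ StrictMono p.2 ∧ ∀ j, p.2 j < p.1 j} := by
  intro p hp q hq a b ha hb hab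
  have combo_lt {u v u' v' : ℝ} (h : u < v) (h' : u' < v') : a * u + b * u' < a * v + b * v' := by
    have := convex_Ioi (0 : ℝ) (sub_pos.2 h) (sub_pos.2 h') ha hb hab
    simp only [smul_eq_mul, Set.mem_Ioi] at this
    linarith
  exact ⟨fun i j hij => combo_lt (hp.1 hij) (hq.1 hij),
    fun i j hij => combo_lt (hp.2.1 hij) (hq.2.1 hij), fun j => combo_lt (hp.2.2 j) (hq.2.2 j)⟩

lemma det_truncPow_pos {r : ℕ} {α : ℝ} (hα : (r : ℝ) - 2 < α) {x y : Fin r → ℝ}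
    (hx : StrictMono x) (hy : StrictMono y) (hxy : ∀ j, y j < x j) :
    0 < (of fun j k => truncPow α (x j - y k)).det := by
  obtain hr | hr := lt_or_ge r 2
  · exact det_truncPow_pos_of_le hxy fun j k hjk => absurd hjk (by omega)
  have hα₀ : 0 < α := by linarith [show (2 : ℝ) ≤ r by exact_mod_cast hr]
  let f (p : (Fin r → ℝ) × (Fin r → ℝ)) : ℝ := (of fun j k => truncPow α (p.1 j - p.2 k)).det
  have hf : Continuous f := Continuous.matrix_det <| continuous_matrix fun j k =>
    (continuous_truncPow hα₀).comp (by fun_prop)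
  let x₀ (j : Fin r) : ℝ := j + 1 / 2
  let y₀ (k : Fin r) : ℝ := k
  have hx₀ : StrictMono x₀ := fun i j hij => by simpa [x₀] using hij
  have hy₀ : StrictMono y₀ := fun i j hij => by simpa [y₀] using hij
  have hpos₀ : 0 < f (x₀, y₀) := det_truncPow_pos_of_le (fun j => by simp [x₀, y₀])
    fun j k hjk => by
      have : (j : ℝ) + 1 ≤ k := by exact_mod_cast hjk
      simp only [x₀, y₀]
      linarith
  by_contra! hneg
  obtain ⟨p, hp, hp0⟩ := (convex_setOf_strictMono_lt r).isPreconnected.intermediate_value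
    ⟨hx, hy, hxy⟩ ⟨hx₀, hy₀, fun j => by simp [x₀, y₀]⟩ hf.continuousOn
    ⟨show f (x, y) ≤ 0 from hneg, hpos₀.le⟩
  exact det_truncPow_ne_zero hα hp.1 hp.2.1 hp.2.2 hp0

lemma det_truncPow_nonneg_of_lt {r : ℕ} {α : ℝ} (hα : (r : ℝ) - 2 < α) {x y : Fin r → ℝ}
    (hx : StrictMono x) (hy : StrictMono y) : 0 ≤ (of fun j k => truncPow α (x j - y k)).det := by
  by_cases hxy : ∀ j, y j < x j
  · exact (det_truncPow_pos hα hx hy hxy).le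
  · obtain ⟨j₀, hj₀⟩ := not_forall.1 hxy
    refine (det_eq_zero_of_zero_corner j₀ fun i k hi hk => truncPow_of_nonpos ?_ α).ge
    linarith [hx.monotone hi, hy.monotone hk, not_lt.1 hj₀]

noncomputable def binomKernel (m : ℕ) (a b : ℤ) : ℝ :=
  if b < a then ((a - b - 1).toNat.choose m : ℝ) else 0

lemma binomKernel_succ_add_one (m : ℕ) (a b : ℤ) :
    binomKernel (m + 1) (a + 1) b = binomKernel (m + 1) a b + binomKernel m a b := by
  unfold binomKernel
  rcases lt_trichotomy b a with h | rfl | h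
  · rw [if_pos (by omega), if_pos h, if_pos h,
      show (a + 1 - b - 1).toNat = (a - b - 1).toNat + 1 by omega, Nat.choose_succ_succ,
      Nat.cast_add, add_comm]
  · simp
  · rw [if_neg (by omega), if_neg (by omega), if_neg (by omega), add_zero]

lemma sum_Ico_binomKernel (m : ℕ) {L b : ℤ} (hL : L ≤ b) (a : ℤ) :
    ∑ c ∈ Finset.Ico L a, binomKernel m c b = binomKernel (m + 1) a b := by
  obtain ha | ha := le_total a L
  · rw [Finset.Ico_eq_empty_of_le ha, Finset.sum_empty, binomKernel, if_neg (by omega)]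
  induction a, ha using Int.leInduction with
  | base => rw [Finset.Ico_self, Finset.sum_empty, binomKernel, if_neg (by omega)]
  | succ a ha ih =>
    rw [Finset.Ico_add_one_right_eq_Icc, ← Finset.Ico_insert_right ha,
      Finset.sum_insert Finset.right_notMem_Ico, ih, binomKernel_succ_add_one, add_comm]

lemma det_binomKernel_nonneg (m : ℕ) {r : ℕ} (a b : Fin r → ℤ) (ha : StrictMono a)
    (hb : StrictMono b) : 0 ≤ (of fun j k => binomKernel m (a j) (b k)).det := by
  induction m generalizing a with
  | zero => simpa [binomKernel] using det_heaviside_nonneg a b ha.monotone hb.monotone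
  | succ m ih =>
    obtain ⟨L, hL⟩ := (Set.finite_range b).bddBelow
    obtain ⟨U, hU⟩ := (Set.finite_range a).bddAbove
    let A : Matrix (Fin r) (Finset.Ico L U) ℝ := of fun j c => if (c : ℤ) < a j then 1 else 0
    let B : Matrix (Finset.Ico L U) (Fin r) ℝ := of fun c k => binomKernel m c (b k)
    have hAB : (of fun j k => binomKernel (m + 1) (a j) (b k)) = A * B := by
      ext j k
      rw [of_apply, mul_apply, ← sum_Ico_binomKernel m (hL (Set.mem_range_self k)),
        ← Finset.Ico_filter_lt_of_le_right (hU (Set.mem_range_self j)), Finset.sum_filter,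
        ← Finset.sum_coe_sort]
      simp [A, B, ite_mul]
    rw [hAB, det_mul_eq_sum_strictMono]
    refine Finset.sum_nonneg fun g hg => mul_nonneg ?_ (ih _ ?_)
    · exact det_heaviside_nonneg a (fun i => (g i : ℤ)) ha.monotone
        (Subtype.strictMono_coe _ |>.comp (Finset.mem_filter.1 hg).2).monotone
    · exact Subtype.strictMono_coe _ |>.comp (Finset.mem_filter.1 hg).2

lemma factorial_mul_binomKernel (n : ℕ) {a b : ℤ} (h : b < a) :
    (n ! : ℝ) * binomKernel n a b = ∏ i ∈ Finset.range n, ((a - b - 1 : ℤ) - (i : ℝ)) := by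
  have hcast : ((a - b - 1).toNat : ℝ) = ((a - b - 1 : ℤ) : ℝ) := by
    exact_mod_cast Int.toNat_of_nonneg (by omega)
  rw [binomKernel, if_pos h, Nat.cast_choose_eq_descPochhammer_div,
    descPochhammer_eval_eq_prod_range, mul_div_cancel₀ _ (by positivity), hcast]

lemma tendsto_floor_mul_div (x : ℝ) : Tendsto (fun D : ℝ => (⌊D * x⌋ : ℝ) / D) atTop (𝓝 x) := by
  refine tendsto_of_tendsto_of_tendsto_of_le_of_le' (g := fun D => x - D⁻¹) ?_ tendsto_const_nhds
    ?_ ?_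
  · simpa using tendsto_const_nhds.sub (tendsto_inv_atTop_zero (𝕜 := ℝ))
  · filter_upwards [eventually_gt_atTop 0] with D hD
    rw [le_div_iff₀ hD, sub_mul, inv_mul_cancel₀ hD.ne', mul_comm]
    linarith [Int.sub_one_lt_floor (D * x)]
  · filter_upwards [eventually_gt_atTop 0] with D hD
    rw [div_le_iff₀ hD, mul_comm]
    exact Int.floor_le _

lemma eventually_floor_mul_lt_floor_mul {u v : ℝ} (h : u < v) :
    ∀ᶠ D : ℝ in atTop, ⌊D * u⌋ < ⌊D * v⌋ := by
  filter_upwards [(tendsto_id.atTop_mul_const (sub_pos.2 h)).eventually_ge_atTop 1] with D hD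
  rw [Int.lt_iff_add_one_le, ← Int.floor_add_one]
  exact Int.floor_mono (by simp only [id] at hD; linarith)

lemma eventually_strictMono_floor_mul {ι : Type*} [Finite ι] [Preorder ι] {x : ι → ℝ}
    (hx : StrictMono x) : ∀ᶠ D : ℝ in atTop, StrictMono fun i => ⌊D * x i⌋ := by
  have hpair (i j : ι) : ∀ᶠ D : ℝ in atTop, i < j → ⌊D * x i⌋ < ⌊D * x j⌋ := by
    by_cases hij : i < j
    · exact (eventually_floor_mul_lt_floor_mul (hx hij)).mono fun _ h _ => h
    · exact Eventually.of_forall fun _ h => absurd h hij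
  filter_upwards [eventually_all.2 fun i => eventually_all.2 (hpair i)] with D hD i j hij
  exact hD i j hij

lemma tendsto_binomKernel_floor (n : ℕ) (x y : ℝ) :
    Tendsto (fun D : ℝ => n ! / D ^ n * binomKernel n ⌊D * x⌋ ⌊D * y⌋) atTop
      (𝓝 (truncPow n (x - y))) := by
  obtain hxy | hxy := le_or_gt x y
  · rw [truncPow_of_nonpos (sub_nonpos.2 hxy)]
    refine tendsto_const_nhds.congr' ?_
    filter_upwards [eventually_ge_atTop 0] with D hD
    rw [binomKernel, if_neg (not_lt.2 (Int.floor_mono (mul_le_mul_of_nonneg_left hxy hD))),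
      mul_zero]
  have hlim : Tendsto
      (fun D : ℝ => ∏ i ∈ Finset.range n, ((⌊D * x⌋ - ⌊D * y⌋ - 1 : ℤ) - (i : ℝ)) / D) atTop
      (𝓝 (∏ _i ∈ Finset.range n, (x - y))) := by
    refine tendsto_finsetProd _ fun i _ => ?_
    have := ((tendsto_floor_mul_div x).sub (tendsto_floor_mul_div y)).sub
      ((tendsto_const_nhds (x := 1 + (i : ℝ))).div_atTop tendsto_id)
    rw [sub_zero] at this
    refine this.congr' ?_
    filter_upwards [eventually_gt_atTop 0] with D hD
    simp only [id]
    push_cast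
    field_simp
    ring
  rw [truncPow_of_pos (sub_pos.2 hxy), Real.rpow_natCast]
  rw [Finset.prod_const, Finset.card_range] at hlim
  refine hlim.congr' ?_
  filter_upwards [eventually_floor_mul_lt_floor_mul hxy] with D hD
  rw [Finset.prod_div_distrib, Finset.prod_const, Finset.card_range,
    ← factorial_mul_binomKernel n hD]
  ring

lemma det_truncPow_natCast_nonneg (n : ℕ) {r : ℕ} {x y : Fin r → ℝ} (hx : StrictMono x)
    (hy : StrictMono y) : 0 ≤ (of fun j k => truncPow n (x j - y k)).det := by
  have hlim : Tendsto
      (fun D : ℝ => (of fun j k => n ! / D ^ n * binomKernel n ⌊D * x j⌋ ⌊D * y k⌋).det) atTop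
      (𝓝 (of fun j k => truncPow n (x j - y k)).det) :=
    ((continuous_id.matrix_det).tendsto _).comp <| tendsto_pi_nhds.2 fun j =>
      tendsto_pi_nhds.2 fun k => tendsto_binomKernel_floor n (x j) (y k)
  refine ge_of_tendsto hlim ?_
  filter_upwards [eventually_strictMono_floor_mul hx, eventually_strictMono_floor_mul hy,
    eventually_gt_atTop 0] with D hxD hyD hD
  rw [show (of fun j k => n ! / D ^ n * binomKernel n ⌊D * x j⌋ ⌊D * y k⌋) =
    (n ! / D ^ n) • of fun j k => binomKernel n ⌊D * x j⌋ ⌊D * y k⌋ from rfl, det_smul]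
  exact mul_nonneg (by positivity) (det_binomKernel_nonneg n _ _ hxD hyD)

lemma pow0_Omega (α t : ℝ) : pow0 (Omega t) α = Real.exp (-(α * t)) * truncPow α t := by
  rcases lt_or_ge 0 t with ht | ht
  · have hΩ : 0 < t * Real.exp (-t) := mul_pos ht (Real.exp_pos _)
    rw [pow0, Omega, if_pos ht, if_neg hΩ.ne', truncPow_of_pos ht,
      Real.mul_rpow ht.le (Real.exp_pos _).le, ← Real.exp_mul]
    ring_nf
  · rw [pow0, Omega, if_neg ht.not_gt, if_pos rfl, truncPow_of_nonpos ht, mul_zero]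

lemma det_pow0_Omega {r : ℕ} (α : ℝ) (x y : Fin r → ℝ) :
    (of fun j k => pow0 (Omega (x j - y k)) α).det =
      (∏ j, Real.exp (-(α * x j))) * ((∏ k, Real.exp (α * y k)) *
        (of fun j k => truncPow α (x j - y k)).det) := by
  rw [← det_mul_row, ← det_mul_column]
  congr 1
  ext j k
  rw [of_apply, pow0_Omega, show -(α * (x j - y k)) = -(α * x j) + α * y k by ring, Real.exp_add]
  simp only [of_apply]
  ring

theorem stmt0_general (p : ℕ) (hp : 2 ≤ p) (α : ℝ)
    (h : (∃ n : ℕ, α = n) ∨ (p : ℝ) - 2 ≤ α) :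
    TNpKer p Set.univ Set.univ (fun x y => pow0 (Omega (x - y)) α) := by
  intro r _ hrp x y hx hy _ _
  rw [det_pow0_Omega]
  refine mul_nonneg (by positivity) (mul_nonneg (by positivity) ?_)
  obtain ⟨n, rfl⟩ | hα : (∃ n : ℕ, α = n) ∨ (r : ℝ) - 2 < α := by
    refine h.elim Or.inl fun hα => or_iff_not_imp_right.2 fun hle => ⟨p - 2, ?_⟩
    have hrp' : (r : ℝ) ≤ p := by exact_mod_cast hrp
    rw [Nat.cast_sub hp, Nat.cast_two]
    linarith [not_lt.1 hle]
  · exact det_truncPow_natCast_nonneg n hx hy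
  · exact det_truncPow_nonneg_of_lt hα hx hy

theorem stmt0 (p : ℕ) (hp : 2 ≤ p) (α : ℝ) (hα : 0 ≤ α)
    (h : (∃ n : ℕ, α = n) ∨ (p : ℝ) - 2 ≤ α) :
    TNpKer p Set.univ Set.univ (fun x y => pow0 (Omega (x - y)) α) :=
  stmt0_general p hp α h
end

section
/- Let p ≥ 2 be an integer and let α ∈ (0, p−2) be a real number that is not an integer. Then the function Ω(x)^α is not TN_p: there exist an integer 1 ≤ r ≤ p and strictly increasing real tuples x₁ < ⋯ < x_r and y₁ < ⋯ < y_r such that det (Ω(x_j − y_k)^α)_{j,k=1}^r < 0. -/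
open Matrix Set Filter

/-!
Let `n = ⌈α⌉`, so `n - 1 < α < n`, and take the `m = n + 2 ≤ p` points `x_j = j + 1` and
`y_k = ε ^ (m - k)` with `ε` small. Since
`Ω(x_j - y_k)^α = x_j^α e^{-α x_j} · (1 + u_j y_k)^α · e^{α y_k}` with `u_j = -1/x_j`,
the determinant has the sign of `det ((1 + u_j y_k)^α)`. Expand each entry in the binomial
series `∑ᵢ (α choose i) (u_j y_k)^i` and the determinant multilinearly: the term
taking the `iₖ`-th monomial in row `k` has order `ε ^ ∑ₖ (m - k) iₖ`, it vanishes when two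
`iₖ` coincide, and by a rearrangement argument the unique remaining term of least order is
`iₖ = k`, equal to `(∏_{i<m} (α choose i)) · det (vandermonde u) · ε ^ ∑ₖ (m - k) k`.
The Vandermonde factor is positive since `u` increases, and among the binomial coefficients
only `α choose (n + 1)` is negative.
-/

open Asymptotics Topology

theorem Finset.sum_range_card_le_sum (S : Finset ℕ) : ∑ i ∈ range S.card, i ≤ ∑ i ∈ S, i := by
  refine Finset.induction_on_max S (by simp) fun a S hlt _ => ?_
  have hcard : S.card ≤ a := by
    simpa using Finset.card_le_card (fun x hx => Finset.mem_range.2 (hlt x hx) : S ⊆ range a)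
  have haS : a ∉ S := fun h => (hlt a h).false
  rw [card_insert_of_notMem haS, sum_range_succ, sum_insert haS]
  omega

theorem sum_val_le_sum_of_injective {m : ℕ} {r : Fin m → ℕ} (hr : Function.Injective r) :
    ∑ k : Fin m, (k : ℕ) ≤ ∑ k, r k := by
  have := (Finset.univ.image r).sum_range_card_le_sum
  rwa [Finset.card_image_of_injective _ hr, Finset.card_univ, Fintype.card_fin,
    Finset.sum_image (fun _ _ _ _ h => hr h), ← Fin.sum_univ_eq_sum_range] at this

/-- The order in `ε` of the product `∏ₖ (ε ^ (m - k)) ^ r k`. -/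
def weightedSum {m : ℕ} (r : Fin m → ℕ) : ℕ := ∑ k : Fin m, (m - k) * r k

theorem le_weightedSum {m : ℕ} (r : Fin m → ℕ) (k : Fin m) : (m - k) * r k ≤ weightedSum r :=
  Finset.single_le_sum (f := fun k : Fin m => (m - k) * r k) (fun _ _ => Nat.zero_le _)
    (Finset.mem_univ k)

theorem val_le_weightedSum_val {m : ℕ} (k : Fin m) :
    (k : ℕ) ≤ weightedSum (Fin.val : Fin m → ℕ) :=
  (Nat.le_mul_of_pos_left _ (by omega)).trans (le_weightedSum _ k)

theorem weightedSum_succ {m : ℕ} (r : Fin (m + 1) → ℕ) :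
    weightedSum r = weightedSum (r ∘ Fin.castSucc) + ∑ k, r k := by
  have hterm (k : Fin m) :
      (m + 1 - k) * r k.castSucc = (m - k) * r k.castSucc + r k.castSucc := by
    rw [show m + 1 - k = (m - k) + 1 by omega, add_one_mul]
  simp only [weightedSum, Fin.sum_univ_castSucc (n := m), Fin.val_castSucc, Fin.val_last,
    hterm, Finset.sum_add_distrib, Function.comp_apply]
  simp only [add_tsub_cancel_left, one_mul]
  ring

theorem weightedSum_val_lt {m : ℕ} {r : Fin m → ℕ} (hr : Function.Injective r)
    (hne : r ≠ Fin.val) : weightedSum (Fin.val : Fin m → ℕ) < weightedSum r := by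
  induction m with
  | zero => exact (hne (Subsingleton.elim _ _)).elim
  | succ m ih =>
    rw [weightedSum_succ, weightedSum_succ]
    have hsum := sum_val_le_sum_of_injective hr
    have hval : (Fin.val ∘ Fin.castSucc : Fin m → ℕ) = Fin.val := rfl
    by_cases hinit : r ∘ Fin.castSucc = Fin.val
    · have hr' : ∀ k : Fin m, r k.castSucc = k := congrFun hinit
      have hge : m ≤ r (Fin.last m) := by
        by_contra! h
        exact (Fin.castSucc_lt_last _).ne (hr (hr' ⟨_, h⟩))
      have hne' : r (Fin.last m) ≠ m := fun h => hne <| funext <| Fin.lastCases h hr'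
      rw [hinit, hval, Fin.sum_univ_castSucc, Fin.sum_univ_castSucc (n := m)]
      simp only [hr', Fin.val_castSucc, Fin.val_last]
      omega
    · have := ih (hr.comp (Fin.castSucc_injective m)) hinit
      rw [hval]
      omega

theorem Matrix.det_isBigO_prod {α ι R 𝕜 : Type*} [Fintype ι] [DecidableEq ι]
    [NormedCommRing R] [NormedField 𝕜] {l : Filter α} {A : α → Matrix ι ι R}
    {w : ι → α → 𝕜} (h : ∀ i j, (fun x => A x i j) =O[l] w i) :
    (fun x => (A x).det) =O[l] fun x => ∏ i, w i x := by
  simp_rw [Matrix.det_apply']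
  refine IsBigO.fun_sum fun σ _ => IsBigO.const_mul_left ?_ _
  have hprod := IsBigO.finsetProd (s := Finset.univ) fun i _ => h (σ i) i
  rwa [funext fun x => Equiv.prod_comp σ (w · x)] at hprod

theorem isBigO_pow_pow_of_le {m n : ℕ} (h : m ≤ n) :
    (fun x : ℝ => x ^ n) =O[𝓝 0] fun x => x ^ m := by
  rcases h.lt_or_eq with h | rfl
  · exact (isLittleO_pow_pow h).isBigO
  · exact isBigO_refl _ _

theorem eventually_neg_of_sub_isBigO {F : ℝ → ℝ} {c : ℝ} {D : ℕ}
    (hF : (fun ε => F ε - c * ε ^ D) =O[𝓝 0] fun ε => ε ^ (D + 1)) (hc : c < 0) :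
    ∀ᶠ ε in 𝓝[>] 0, F ε < 0 := by
  have hsmall := (hF.trans_isLittleO (isLittleO_pow_pow (Nat.lt_succ_self D))).def
    (c := -c / 2) (by linarith)
  filter_upwards [nhdsWithin_le_nhds hsmall, self_mem_nhdsWithin] with ε hε (hpos : 0 < ε)
  have hD : 0 < ε ^ D := pow_pos hpos D
  rw [Real.norm_eq_abs, Real.norm_eq_abs, abs_of_pos hD] at hε
  nlinarith [le_abs_self (F ε - c * ε ^ D)]

/-- The splitting `φ t = ∑_{i ≤ N} taylorPiece φ a N i t` into the monomials `a i * t ^ i`,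
`i < N`, and the remainder, stored as the piece of index `N`. -/
def taylorPiece (φ : ℝ → ℝ) (a : ℕ → ℝ) (N i : ℕ) (t : ℝ) : ℝ :=
  if i < N then a i * t ^ i else φ t - ∑ l ∈ Finset.range N, a l * t ^ l

section TaylorPieces

variable {φ : ℝ → ℝ} {a : ℕ → ℝ} {N m : ℕ}

theorem sum_taylorPiece (t : ℝ) :
    ∑ i ∈ Finset.range (N + 1), taylorPiece φ a N i t = φ t := by
  have hlow : ∀ i ∈ Finset.range N, taylorPiece φ a N i t = a i * t ^ i :=
    fun i hi => if_pos (Finset.mem_range.1 hi)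
  rw [Finset.sum_range_succ, Finset.sum_congr rfl hlow, taylorPiece, if_neg (lt_irrefl N)]
  ring

theorem taylorPiece_isBigO
    (hφ : (fun t => φ t - ∑ l ∈ Finset.range N, a l * t ^ l) =O[𝓝 0] fun t => t ^ N)
    {i : ℕ} (hi : i ≤ N) : taylorPiece φ a N i =O[𝓝 0] fun t => t ^ i := by
  rcases hi.lt_or_eq with hi | rfl
  · have hpiece : taylorPiece φ a N i = fun t => a i * t ^ i := funext fun t => if_pos hi
    exact hpiece ▸ (isBigO_refl _ _).const_mul_left (a i)
  · have hpiece : taylorPiece φ a i i = fun t => φ t - ∑ l ∈ Finset.range i, a l * t ^ l :=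
      funext fun t => if_neg (lt_irrefl i)
    exact hpiece ▸ hφ

theorem det_eq_sum_det_taylorPieces (u : Fin m → ℝ) (ε : ℝ) :
    (of fun k j : Fin m => φ (u j * ε ^ (m - k))).det
      = ∑ r ∈ Fintype.piFinset fun _ : Fin m => Finset.range (N + 1),
          (of fun k j : Fin m => taylorPiece φ a N (r k) (u j * ε ^ (m - k))).det := by
  have hrows : (of fun k j : Fin m => φ (u j * ε ^ (m - k)))
      = of fun k : Fin m =>
          ∑ i ∈ Finset.range (N + 1), fun j => taylorPiece φ a N i (u j * ε ^ (m - k)) := by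
    ext k j
    simp [Finset.sum_apply, sum_taylorPiece]
  rw [hrows]
  exact (detRowAlternating (R := ℝ) (n := Fin m)).toMultilinearMap.map_sum_finset
    (fun k i j => taylorPiece φ a N i (u j * ε ^ (m - k))) fun _ => Finset.range (N + 1)

theorem det_taylorPieces_isBigO
    (hφ : (fun t => φ t - ∑ l ∈ Finset.range N, a l * t ^ l) =O[𝓝 0] fun t => t ^ N)
    (u : Fin m → ℝ) {r : Fin m → ℕ} (hr : ∀ k, r k ≤ N) :
    (fun ε => (of fun k j : Fin m => taylorPiece φ a N (r k) (u j * ε ^ (m - k))).det)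
      =O[𝓝 0] fun ε => ε ^ weightedSum r := by
  have hentry (k j : Fin m) : (fun ε : ℝ => taylorPiece φ a N (r k) (u j * ε ^ (m - k)))
      =O[𝓝 0] fun ε => ε ^ ((m - k) * r k) := by
    have hlim : Tendsto (fun ε : ℝ => u j * ε ^ (m - k)) (𝓝 0) (𝓝 0) := by
      have hk : m - (k : ℕ) ≠ 0 := by omega
      simpa [hk] using ((continuous_pow (m - (k : ℕ))).const_mul (u j)).tendsto 0
    refine ((taylorPiece_isBigO hφ (hr k)).comp_tendsto hlim).trans ?_
    simpa only [Function.comp_def, mul_pow, ← pow_mul] using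
      (isBigO_refl (fun ε : ℝ => ε ^ ((m - k) * r k)) _).const_mul_left (u j ^ r k)
  simpa only [weightedSum, Finset.prod_pow_eq_pow_sum] using
    Matrix.det_isBigO_prod
      (A := fun ε => of fun k j : Fin m => taylorPiece φ a N (r k) (u j * ε ^ (m - k))) hentry

theorem det_taylorPieces_of_lt (u : Fin m → ℝ) {r : Fin m → ℕ} (hr : ∀ k, r k < N) (ε : ℝ) :
    (of fun k j : Fin m => taylorPiece φ a N (r k) (u j * ε ^ (m - k))).det
      = (∏ k, a (r k) * ε ^ ((m - k) * r k)) * (of fun k j : Fin m => u j ^ r k).det := by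
  rw [← det_mul_column]
  congr 1
  ext k j
  simp only [of_apply, taylorPiece, if_pos (hr k)]
  ring

theorem det_taylorPieces_isBigO_of_ne
    (hφ : (fun t => φ t - ∑ l ∈ Finset.range N, a l * t ^ l) =O[𝓝 0] fun t => t ^ N)
    (u : Fin m → ℝ) (hN : weightedSum (Fin.val : Fin m → ℕ) < N) {r : Fin m → ℕ}
    (hr : ∀ k, r k ≤ N) (hne : r ≠ Fin.val) :
    (fun ε => (of fun k j : Fin m => taylorPiece φ a N (r k) (u j * ε ^ (m - k))).det)
      =O[𝓝 0] fun ε => ε ^ (weightedSum (Fin.val : Fin m → ℕ) + 1) := by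
  by_cases hdeg : (∀ k, r k < N) ∧ ¬Function.Injective r
  · obtain ⟨hlt, hinj⟩ := hdeg
    obtain ⟨k₁, k₂, hr₁₂, hk₁₂⟩ := Function.not_injective_iff.1 hinj
    have hzero : (of fun k j : Fin m => u j ^ r k).det = 0 :=
      det_zero_of_row_eq hk₁₂ (funext fun j => by simp [hr₁₂])
    simp_rw [det_taylorPieces_of_lt u hlt, hzero, mul_zero]
    exact isBigO_zero _ _
  · have hw : weightedSum (Fin.val : Fin m → ℕ) + 1 ≤ weightedSum r := by
      rcases not_and_or.1 hdeg with hbig | hinj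
      · obtain ⟨k, hk⟩ := not_forall.1 hbig
        have hrk : r k = N := le_antisymm (hr k) (not_lt.1 hk)
        have := le_weightedSum r k
        rw [hrk] at this
        nlinarith [show 1 ≤ m - (k : ℕ) by omega]
      · exact weightedSum_val_lt (not_not.1 hinj) hne
    exact (det_taylorPieces_isBigO hφ u hr).trans (isBigO_pow_pow_of_le hw)

theorem det_sub_leading_isBigO
    (hφ : (fun t => φ t - ∑ l ∈ Finset.range N, a l * t ^ l) =O[𝓝 0] fun t => t ^ N)
    (u : Fin m → ℝ) (hN : weightedSum (Fin.val : Fin m → ℕ) < N) :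
    (fun ε => (of fun k j : Fin m => φ (u j * ε ^ (m - k))).det
        - (∏ k : Fin m, a k) * (vandermonde u).det * ε ^ weightedSum (Fin.val : Fin m → ℕ))
      =O[𝓝 0] fun ε => ε ^ (weightedSum (Fin.val : Fin m → ℕ) + 1) := by
  have hvalN (k : Fin m) : (k : ℕ) < N := (val_le_weightedSum_val k).trans_lt hN
  have hval : (Fin.val : Fin m → ℕ) ∈ Fintype.piFinset fun _ => Finset.range (N + 1) :=
    Fintype.mem_piFinset.2 fun k => Finset.mem_range.2 (Nat.lt_succ_of_lt (hvalN k))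
  have hlead (ε : ℝ) : (of fun k j : Fin m => taylorPiece φ a N k (u j * ε ^ (m - k))).det
      = (∏ k : Fin m, a k) * (vandermonde u).det * ε ^ weightedSum (Fin.val : Fin m → ℕ) := by
    rw [det_taylorPieces_of_lt u hvalN ε, Finset.prod_mul_distrib, Finset.prod_pow_eq_pow_sum,
      ← det_transpose (vandermonde u)]
    simp only [weightedSum]
    ring_nf
    rfl
  simp_rw [det_eq_sum_det_taylorPieces (N := N) (a := a) u, ← Finset.sum_erase_add _ _ hval,
    hlead, add_sub_cancel_right]
  refine IsBigO.fun_sum fun r hr => det_taylorPieces_isBigO_of_ne hφ u hN (fun k => ?_)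
    (Finset.ne_of_mem_erase hr)
  exact Nat.lt_succ_iff.1
    (Finset.mem_range.1 (Fintype.mem_piFinset.1 (Finset.mem_of_mem_erase hr) k))

end TaylorPieces

theorem Real.one_add_rpow_sub_sum_isBigO (α : ℝ) (N : ℕ) :
    (fun t : ℝ => (1 + t) ^ α - ∑ l ∈ Finset.range N, Ring.choose α l * t ^ l)
      =O[𝓝 0] fun t => t ^ N := by
  rw [← isBigO_norm_right]
  simpa [FormalMultilinearSeries.partialSum, binomialSeries, mul_comm] using
    Real.one_add_rpow_hasFPowerSeriesAt_zero.isBigO_sub_partialSum_pow N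

open Polynomial in
theorem Ring.choose_real_eq (α : ℝ) (n : ℕ) :
    Ring.choose α n = (descPochhammer ℝ n).eval α / n.factorial := by
  rw [Ring.choose_eq_smul, ← aeval_eq_smeval, aeval_def, ← eval_map, descPochhammer_map,
    smul_eq_mul, inv_mul_eq_div]

theorem Ring.choose_real_pos {α : ℝ} {n : ℕ} (h : (n : ℝ) - 1 < α) : 0 < Ring.choose α n := by
  rw [Ring.choose_real_eq]
  exact div_pos (descPochhammer_pos h) (by positivity)

theorem Ring.choose_real_succ_neg {α : ℝ} {n : ℕ} (h₁ : (n : ℝ) - 1 < α) (h₂ : α < n) :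
    Ring.choose α (n + 1) < 0 := by
  rw [Ring.choose_real_eq, descPochhammer_succ_eval]
  exact div_neg_of_neg_of_pos (mul_neg_of_pos_of_neg (descPochhammer_pos h₁) (by linarith))
    (by positivity)

theorem prod_choose_real_neg {α : ℝ} {n : ℕ} (h₁ : (n : ℝ) - 1 < α) (h₂ : α < n) :
    ∏ k : Fin (n + 2), Ring.choose α k < 0 := by
  rw [Fin.prod_univ_castSucc]
  refine mul_neg_of_pos_of_neg (Finset.prod_pos fun k _ => Ring.choose_real_pos ?_)
    (Ring.choose_real_succ_neg h₁ h₂)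
  have : ((k : ℕ) : ℝ) ≤ n := by exact_mod_cast Nat.lt_succ_iff.1 k.isLt
  simp only [Fin.val_castSucc]
  linarith

theorem Matrix.det_vandermonde_pos {m : ℕ} {v : Fin m → ℝ} (hv : StrictMono v) :
    0 < (vandermonde v).det := by
  rw [det_vandermonde]
  exact Finset.prod_pos fun i _ =>
    Finset.prod_pos fun j hj => sub_pos.2 (hv (Finset.mem_Ioi.1 hj))

theorem Matrix.det_of_mul_mul {n R : Type*} [Fintype n] [DecidableEq n] [CommRing R]
    (f g : n → R) (A : Matrix n n R) :
    (of fun i j => f i * A i j * g j).det = (∏ i, f i) * (∏ j, g j) * A.det := by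
  rw [mul_assoc, ← det_mul_row g A, ← det_mul_column f]
  congr 1
  ext i j
  simp only [of_apply]
  ring

theorem pow0_Omega_sub {x y : ℝ} (α : ℝ) (hx : 0 < x) (hxy : y < x) :
    pow0 (Omega (x - y)) α
      = x ^ α * Real.exp (-(α * x)) * (1 + -x⁻¹ * y) ^ α * Real.exp (α * y) := by
  have hpos : 0 < x - y := sub_pos.2 hxy
  have hfac : x - y = x * (1 + -x⁻¹ * y) := by field_simp; ring
  have hfac_pos : 0 ≤ 1 + -x⁻¹ * y := by
    rw [← mul_le_mul_iff_of_pos_left hx, ← hfac, mul_zero]; exact hpos.le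
  rw [Omega, if_pos hpos, pow0, if_neg (mul_pos hpos (Real.exp_pos _)).ne',
    Real.mul_rpow hpos.le (Real.exp_pos _).le, ← Real.exp_mul, hfac,
    Real.mul_rpow hx.le hfac_pos, ← hfac, show -(x - y) * α = -(α * x) + α * y by ring,
    Real.exp_add]
  ring

theorem exists_det_pow0_Omega_neg {n : ℕ} {α : ℝ} (h₁ : (n : ℝ) - 1 < α) (h₂ : α < n) :
    ∃ x y : Fin (n + 2) → ℝ, StrictMono x ∧ StrictMono y ∧
      (of fun j k => pow0 (Omega (x j - y k)) α).det < 0 := by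
  set m := n + 2
  set D := weightedSum (Fin.val : Fin m → ℕ)
  let x : Fin m → ℝ := fun j => j + 1
  have hx : StrictMono x := fun i j hij => by simpa [x] using hij
  have hx_one (j : Fin m) : 1 ≤ x j := by simp [x]
  let u : Fin m → ℝ := fun j => -(x j)⁻¹
  have hu : StrictMono u := fun i j hij =>
    neg_lt_neg (inv_strictAnti₀ (by linarith [hx_one i]) (hx hij))
  have hlead : (∏ k : Fin m, Ring.choose α k) * (vandermonde u).det < 0 :=
    mul_neg_of_neg_of_pos (prod_choose_real_neg h₁ h₂) (det_vandermonde_pos hu)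
  obtain ⟨ε, hdet, hε⟩ := ((eventually_neg_of_sub_isBigO (det_sub_leading_isBigO
    (Real.one_add_rpow_sub_sum_isBigO α (D + 1)) u (lt_add_one D)) hlead).and
    (Ioo_mem_nhdsGT one_pos)).exists
  let y : Fin m → ℝ := fun k => ε ^ (m - k)
  have hy : StrictMono y := fun i j hij =>
    pow_lt_pow_right_of_lt_one₀ hε.1 hε.2 (by have := j.isLt; have : (i : ℕ) < j := hij; omega)
  have hyx (j k : Fin m) : y k < x j :=
    (pow_le_of_le_one hε.1.le hε.2.le (by omega)).trans_lt (hε.2.trans_le (hx_one j))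
  have hfactor : (of fun j k => pow0 (Omega (x j - y k)) α).det
      = (∏ j, x j ^ α * Real.exp (-(α * x j))) * (∏ k, Real.exp (α * y k))
        * (of fun j k => (1 + u j * y k) ^ α).det := by
    rw [← det_of_mul_mul]
    congr 1
    ext j k
    exact pow0_Omega_sub α (by linarith [hx_one j]) (hyx j k)
  refine ⟨x, y, hx, hy, ?_⟩
  rw [hfactor, ← det_transpose]
  exact mul_neg_of_pos_of_neg (by positivity) hdet

theorem stmt1_general (p : ℕ) (α : ℝ) (hα0 : 0 < α) (hα1 : α < (p : ℝ) - 2)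
    (hαZ : ∀ n : ℤ, α ≠ n) :
    ∃ r : ℕ, 1 ≤ r ∧ r ≤ p ∧ ∃ x y : Fin r → ℝ, StrictMono x ∧ StrictMono y ∧
      (Matrix.of fun j k => pow0 (Omega (x j - y k)) α).det < 0 := by
  set n := ⌈α⌉₊
  have hlt : α < n := (Nat.le_ceil α).lt_of_ne fun h => hαZ n (by exact_mod_cast h)
  have hgt : (n : ℝ) - 1 < α := by linarith [Nat.ceil_lt_add_one hα0.le]
  have hnp : n + 2 < p + 1 := by exact_mod_cast (by linarith : (n : ℝ) + 2 < p + 1)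
  exact ⟨n + 2, by omega, by omega, exists_det_pow0_Omega_neg hgt hlt⟩

theorem stmt1 (p : ℕ) (hp : 2 ≤ p) (α : ℝ) (hα0 : 0 < α) (hα1 : α < (p : ℝ) - 2)
    (hαZ : ∀ n : ℤ, α ≠ n) :
    ∃ r : ℕ, 1 ≤ r ∧ r ≤ p ∧ ∃ x y : Fin r → ℝ, StrictMono x ∧ StrictMono y ∧
      (Matrix.of fun j k => pow0 (Omega (x j - y k)) α).det < 0 :=
  stmt1_general p α hα0 hα1 hαZ
end

section
/- Fix an integer n ≥ 1 and real numbers x₁, …, x_n pairwise distinct, y₁, …, y_n pairwise distinct, with 1 + x_j·y_k > 0 for all j, k. Let S := (1 + x_j·y_k)_{j,k=1}^n and α ∈ ℝ. If α ∉ {0, 1, …, n−2}, then the entrywise power S^{∘α} is non-singular (det S^{∘α} ≠ 0). If α ∈ {0, 1, …, n−2}, then S^{∘α} has rank α + 1. -/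
/-!
A nonzero combination `∑ c_i (1 + x_i t)^α` of `m + 1` terms with distinct `x_i` has at most `m`
zeros on an interval where all bases are positive, unless `α ∈ {0, …, m - 1}`: dividing by the
last term and differentiating leaves a combination of `m` terms with exponent `α - 1`, and Rolle's
theorem loses at most one zero. A left null vector of `S^{∘α}` would give such a combination
vanishing at all `n` points `y_k`. For `α = k ∈ ℕ` the binomial theorem factors `S^{∘k}` through
`ℝ^{k+1}`, while any `(k+1) × (k+1)` principal submatrix is non-singular by the first part.
-/

open Matrix Set

theorem exists_finset_hasDerivAt_eq_zero {f f' : ℝ → ℝ} {I : Set ℝ} (hI : I.OrdConnected)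
    (hf : ∀ t ∈ I, HasDerivAt f (f' t) t) {s : Finset ℝ} (hsI : ↑s ⊆ I)
    (hs : ∀ z ∈ s, f z = 0) :
    ∃ t : Finset ℝ, ↑t ⊆ I ∧ (∀ z ∈ t, f' z = 0) ∧ s.card ≤ t.card + 1 := by
  classical
  -- The invariant `z < a` makes the Rolle point beyond `s.max'` new at each step.
  suffices ∃ t : Finset ℝ, ↑t ⊆ I ∧ (∀ z ∈ t, f' z = 0 ∧ ∃ a ∈ s, z < a) ∧
      s.card ≤ t.card + 1 by
    obtain ⟨t, htI, ht, hcard⟩ := this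
    exact ⟨t, htI, fun z hz => (ht z hz).1, hcard⟩
  induction s using Finset.induction_on_max with
  | empty => exact ⟨∅, by simp, by simp, by simp⟩
  | insert b s hlt ih =>
    have hsI' : ↑s ⊆ I := fun z hz => hsI (Finset.mem_insert_of_mem hz)
    obtain ⟨t, htI, ht, hcard⟩ := ih hsI' fun z hz => hs z (Finset.mem_insert_of_mem hz)
    rcases s.eq_empty_or_nonempty with rfl | hne
    · exact ⟨∅, by simp, by simp, by simp⟩
    have ha : s.max' hne ∈ s := s.max'_mem hne
    have hIcc : Icc (s.max' hne) b ⊆ I := hI.out (hsI' ha) (hsI (Finset.mem_insert_self b s))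
    obtain ⟨w, hw, hw0⟩ := exists_hasDerivAt_eq_zero (hlt _ ha)
      (fun z hz => (hf z (hIcc hz)).continuousAt.continuousWithinAt)
      ((hs _ (Finset.mem_insert_of_mem ha)).trans (hs b (Finset.mem_insert_self b s)).symm)
      (fun z hz => hf z (hIcc (Ioo_subset_Icc_self hz)))
    have hwt : w ∉ t := fun hwt => by
      obtain ⟨a, has, hwa⟩ := (ht w hwt).2
      exact (hwa.trans_le (s.le_max' a has)).not_gt hw.1
    refine ⟨insert w t, ?_, ?_, ?_⟩
    · simpa [Set.insert_subset_iff] using ⟨hIcc (Ioo_subset_Icc_self hw), htI⟩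
    · simp only [Finset.mem_insert, forall_eq_or_imp, exists_eq_or_imp]
      exact ⟨⟨hw0, Or.inl hw.2⟩, fun z hz => ⟨(ht z hz).1, Or.inr (ht z hz).2⟩⟩
    · rw [Finset.card_insert_of_notMem fun h => (hlt b h).false,
        Finset.card_insert_of_notMem hwt]
      omega

theorem hasDerivAt_one_add_mul_rpow_mul_rpow_neg {a b α t : ℝ} (ha : 0 < 1 + a * t)
    (hb : 0 < 1 + b * t) :
    HasDerivAt (fun z => (1 + a * z) ^ α * (1 + b * z) ^ (-α))
      (α * (a - b) * ((1 + a * t) ^ (α - 1) * (1 + b * t) ^ (-α - 1))) t := by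
  have hlin (c : ℝ) : HasDerivAt (fun z => 1 + c * z) c t := by
    simpa using ((hasDerivAt_id t).const_mul c).const_add 1
  refine (((hlin a).rpow_const (p := α) (Or.inl ha.ne')).mul
    ((hlin b).rpow_const (p := -α) (Or.inl hb.ne'))).congr_deriv ?_
  have hA : (1 + a * t) ^ α = (1 + a * t) ^ (α - 1) * (1 + a * t) := by
    rw [← Real.rpow_add_one ha.ne', sub_add_cancel]
  have hB : (1 + b * t) ^ (-α) = (1 + b * t) ^ (-α - 1) * (1 + b * t) := by
    rw [← Real.rpow_add_one hb.ne', sub_add_cancel]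
  rw [hA, hB]
  ring

theorem card_lt_of_sum_mul_one_add_mul_rpow_eq_zero {ι : Type*} {p : Finset ι}
    (hp : p.Nonempty) {x c : ι → ℝ} (hx : Set.InjOn x p) (hc : ∀ i ∈ p, c i ≠ 0) {α : ℝ}
    (hα : ∀ j : ℕ, j + 1 < p.card → α ≠ j) {I : Set ℝ} (hI : I.OrdConnected)
    (hpos : ∀ t ∈ I, ∀ i ∈ p, 0 < 1 + x i * t) {s : Finset ℝ} (hsI : ↑s ⊆ I)
    (hs : ∀ z ∈ s, ∑ i ∈ p, c i * (1 + x i * z) ^ α = 0) :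
    s.card < p.card := by
  induction hp using Finset.Nonempty.cons_induction generalizing c α s with
  | singleton a =>
    suffices s = ∅ by simp [this]
    refine Finset.eq_empty_of_forall_notMem fun z hz => ?_
    have := hs z hz
    rw [Finset.sum_singleton] at this
    exact mul_ne_zero (hc a (Finset.mem_singleton_self a))
      (Real.rpow_pos_of_pos (hpos z (hsI hz) a (Finset.mem_singleton_self a)) α).ne' this
  | cons L p hL hp ih =>
    have hpos' : ∀ t ∈ I, 0 < 1 + x L * t := fun t ht => hpos t ht L (Finset.mem_cons_self L p)
    -- Dividing by `(1 + x L * z) ^ α` keeps the zeros and kills the `L`-th term on differentiation.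
    set c' : ι → ℝ := fun i => c i * (α * (x i - x L))
    set f : ℝ → ℝ := fun z =>
      ∑ i ∈ Finset.cons L p hL, c i * ((1 + x i * z) ^ α * (1 + x L * z) ^ (-α))
    have hf : ∀ t ∈ I, HasDerivAt f
        ((∑ i ∈ p, c' i * (1 + x i * t) ^ (α - 1)) * (1 + x L * t) ^ (-α - 1)) t := by
      intro t ht
      refine (HasDerivAt.fun_sum fun i hi => ((hasDerivAt_one_add_mul_rpow_mul_rpow_neg
        (hpos t ht i hi) (hpos' t ht)).const_mul (c i))).congr_deriv ?_
      rw [Finset.sum_cons, sub_self, mul_zero, zero_mul, mul_zero, zero_add, Finset.sum_mul]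
      exact Finset.sum_congr rfl fun i _ => by ring
    have hfs : ∀ z ∈ s, f z = 0 := by
      intro z hz
      simp only [f, ← mul_assoc, ← Finset.sum_mul, hs z hz, zero_mul]
    obtain ⟨t, htI, ht, hcard⟩ := exists_finset_hasDerivAt_eq_zero hI hf hsI hfs
    have hxL : ∀ i ∈ p, x i ≠ x L := fun i hi h =>
      hL (hx.eq_iff (Finset.mem_cons_of_mem hi) (Finset.mem_cons_self L p) |>.mp h ▸ hi)
    have hα0 : α ≠ 0 := by simpa using hα 0 (by simp [Finset.card_cons, hp.card_pos])
    have := ih (hx.mono (by simp)) (c := c') (α := α - 1)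
      (fun i hi => mul_ne_zero (hc i (Finset.mem_cons_of_mem hi))
        (mul_ne_zero hα0 (sub_ne_zero.mpr (hxL i hi))))
      (fun j hj => by
        have := hα (j + 1) (by rw [Finset.card_cons]; omega)
        push_cast at this; contrapose! this; linarith)
      (fun t ht i hi => hpos t ht i (Finset.mem_cons_of_mem hi)) htI
      (fun z hz => (mul_eq_zero.mp (ht z hz)).resolve_right
        (Real.rpow_pos_of_pos (hpos' z (htI hz)) _).ne')
    rw [Finset.card_cons]
    omega

theorem ordConnected_setOf_forall_one_add_mul_pos {ι : Type*} (x : ι → ℝ) :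
    {t : ℝ | ∀ j, 0 < 1 + x j * t}.OrdConnected :=
  ⟨fun a ha b hb t ht j => by
    rcases le_total 0 (x j) with h | h <;> nlinarith [ha j, hb j, ht.1, ht.2]⟩

theorem det_of_one_add_mul_rpow_ne_zero {ι : Type*} [Fintype ι] [DecidableEq ι] {x y : ι → ℝ}
    (hx : Function.Injective x) (hy : Function.Injective y) (hpos : ∀ j k, 0 < 1 + x j * y k)
    {α : ℝ} (hα : ∀ j : ℕ, j + 1 < Fintype.card ι → α ≠ j) :
    (of fun j k => (1 + x j * y k) ^ α).det ≠ 0 := by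
  intro hdet
  obtain ⟨c, hc0, hcM⟩ := exists_vecMul_eq_zero_iff.mpr hdet
  set p := Finset.univ.filter (c · ≠ 0)
  have hp : p.Nonempty := by
    obtain ⟨j, hj⟩ := Function.ne_iff.mp hc0
    exact ⟨j, Finset.mem_filter.mpr ⟨Finset.mem_univ j, hj⟩⟩
  have hcard := card_lt_of_sum_mul_one_add_mul_rpow_eq_zero hp hx.injOn
    (fun i hi => (Finset.mem_filter.mp hi).2)
    (fun j hj => hα j (hj.trans_le (Finset.card_le_univ p)))
    (ordConnected_setOf_forall_one_add_mul_pos x) (fun t ht i _ => ht i)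
    (s := Finset.univ.image y) (by simpa [Set.subset_def] using fun k j => hpos j k)
    (by
      simp only [Finset.mem_image, Finset.mem_univ, true_and, forall_exists_index,
        forall_apply_eq_imp_iff]
      intro k
      rw [Finset.sum_filter_of_ne fun j _ h => left_ne_zero_of_mul h]
      simpa [vecMul, dotProduct] using congrFun hcM k)
  rw [Finset.card_image_of_injective _ hy, Finset.card_univ] at hcard
  exact hcard.not_ge (Finset.card_le_univ p)

theorem rank_of_one_add_mul_pow_le {R m n : Type*} [CommRing R] [StrongRankCondition R]
    [Fintype n] (x : m → R) (y : n → R) (k : ℕ) :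
    (of fun j l => (1 + x j * y l) ^ k).rank ≤ k + 1 := by
  have hfactor : (of fun j l => (1 + x j * y l) ^ k) =
      of (fun j (i : Fin (k + 1)) => (k.choose i : R) * x j ^ (i : ℕ)) *
        of (fun (i : Fin (k + 1)) l => y l ^ (i : ℕ)) := by
    ext j l
    rw [of_apply, mul_apply, add_comm, add_pow, ← Fin.sum_univ_eq_sum_range]
    refine Finset.sum_congr rfl fun i _ => ?_
    simp only [of_apply, one_pow, mul_pow]
    ring
  rw [hfactor]
  exact (rank_mul_le_left _ _).trans ((rank_le_card_width _).trans_eq (Fintype.card_fin _))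

theorem rank_of_one_add_mul_rpow_natCast {ι : Type*} [Fintype ι] {x y : ι → ℝ}
    (hx : Function.Injective x) (hy : Function.Injective y) (hpos : ∀ j k, 0 < 1 + x j * y k)
    {k : ℕ} (hk : k + 1 ≤ Fintype.card ι) :
    (of fun j l => (1 + x j * y l) ^ (k : ℝ)).rank = k + 1 := by
  obtain ⟨e⟩ := Function.Embedding.nonempty_of_card_le (α := Fin (k + 1)) (β := ι) (by simpa)
  refine le_antisymm (by simpa only [Real.rpow_natCast] using rank_of_one_add_mul_pow_le x y k) ?_
  have hdet := det_of_one_add_mul_rpow_ne_zero (hx.comp e.injective) (hy.comp e.injective)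
    (fun j l => hpos (e j) (e l)) (α := k) (fun j hj => by
      rw [Fintype.card_fin] at hj
      exact_mod_cast (show k ≠ j by omega))
  have hunit : IsUnit ((of fun j l => (1 + x j * y l) ^ (k : ℝ)).submatrix e e).det :=
    hdet.isUnit
  calc k + 1 = ((of fun j l => (1 + x j * y l) ^ (k : ℝ)).submatrix e e).rank := by
        rw [rank_of_isUnit _ ((isUnit_iff_isUnit_det _).mpr hunit), Fintype.card_fin]
    _ ≤ _ := rank_submatrix_le _ _ _

theorem stmt15_general (n : ℕ) (x y : Fin n → ℝ)
    (hx : Function.Injective x) (hy : Function.Injective y)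
    (hpos : ∀ j k, 0 < 1 + x j * y k) (α : ℝ) :
    ((∀ k : ℕ, (k : ℤ) ≤ (n : ℤ) - 2 → α ≠ k) →
      (Matrix.of fun j k => (1 + x j * y k) ^ α).det ≠ 0) ∧
    (∀ k : ℕ, (k : ℤ) ≤ (n : ℤ) - 2 → α = k →
      (Matrix.of fun j k => (1 + x j * y k) ^ α).rank = k + 1) := by
  refine ⟨fun hα => det_of_one_add_mul_rpow_ne_zero hx hy hpos fun j hj => hα j ?_, ?_⟩
  · rw [Fintype.card_fin] at hj
    omega
  · rintro k hk rfl
    exact rank_of_one_add_mul_rpow_natCast hx hy hpos (by rw [Fintype.card_fin]; omega)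

theorem stmt15 (n : ℕ) (hn : 1 ≤ n) (x y : Fin n → ℝ)
    (hx : Function.Injective x) (hy : Function.Injective y)
    (hpos : ∀ j k, 0 < 1 + x j * y k) (α : ℝ) :
    ((∀ k : ℕ, (k : ℤ) ≤ (n : ℤ) - 2 → α ≠ k) →
      (Matrix.of fun j k => (1 + x j * y k) ^ α).det ≠ 0) ∧
    (∀ k : ℕ, (k : ℤ) ≤ (n : ℤ) - 2 → α = k →
      (Matrix.of fun j k => (1 + x j * y k) ^ α).rank = k + 1) :=
  stmt15_general n x y hx hy hpos α
end

section
/- Fix an integer n ≥ 2 and real numbers x₁ < ⋯ < x_n and 0 < y₁ < ⋯ < y_n with 1 + x_j·x_k > 0 for all j, k. Then there exists δ > 0 such that for all 0 < ε ≤ δ, setting x_j^{(ε)}(t) := x_j + t·(ε·y_j − x_j) for t ∈ [0,1], one has 1 + x_j^{(ε)}(t)·x_k^{(ε)}(t) > 0 for all 1 ≤ j, k ≤ n and all t ∈ [0,1]. -/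
open Set

theorem stmt16 (n : ℕ) (hn : 2 ≤ n) (x y : Fin n → ℝ)
    (hx : StrictMono x) (hy : StrictMono y) (hy0 : ∀ j, 0 < y j)
    (hpos : ∀ j k, 0 < 1 + x j * x k) :
    ∃ δ : ℝ, 0 < δ ∧ ∀ ε : ℝ, 0 < ε → ε ≤ δ →
      ∀ t ∈ Set.Icc (0 : ℝ) 1, ∀ j k : Fin n,
        0 < 1 + (x j + t * (ε * y j - x j)) * (x k + t * (ε * y k - x k)) := by
  have hn0 : 0 < n := by omega
  -- minimum of 1 + x j * x k over all pairs
  obtain ⟨p₀, -, hp₀⟩ := Finset.exists_min_image (Finset.univ : Finset (Fin n × Fin n))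
    (fun p => 1 + x p.1 * x p.2) ⟨(⟨0, hn0⟩, ⟨0, hn0⟩), Finset.mem_univ _⟩
  set c : ℝ := min 1 (1 + x p₀.1 * x p₀.2) with hc
  have hc0 : 0 < c := lt_min one_pos (hpos _ _)
  have hc1 : c ≤ 1 := min_le_left _ _
  have hcle : ∀ j k, c ≤ 1 + x j * x k := fun j k =>
    le_trans (min_le_right _ _) (hp₀ (j, k) (Finset.mem_univ _))
  set M : ℝ := ∑ i, |x i| with hM
  have hM0 : 0 ≤ M := Finset.sum_nonneg fun i _ => abs_nonneg _
  have hMb : ∀ j, |x j| ≤ M := fun j =>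
    Finset.single_le_sum (fun i _ => abs_nonneg (x i)) (Finset.mem_univ j)
  set Y : ℝ := ∑ i, y i with hY
  have hY0 : 0 ≤ Y := Finset.sum_nonneg fun i _ => (hy0 i).le
  have hYb : ∀ j, y j ≤ Y := fun j =>
    Finset.single_le_sum (fun i _ => (hy0 i).le) (Finset.mem_univ j)
  refine ⟨c / (2 * (2 * M * Y + 1)), by positivity, ?_⟩
  intro ε hε hεδ t ht j k
  obtain ⟨ht0, ht1⟩ := ht
  have hεc : ε * (2 * (2 * M * Y + 1)) ≤ c :=
    (le_div_iff₀ (by positivity)).mp hεδ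
  have haM := abs_le.mp (hMb j)
  have hbM := abs_le.mp (hMb k)
  have hpY := hYb j
  have hqY := hYb k
  have hp0 := hy0 j
  have hq0 := hy0 k
  have hid : 1 + (x j + t * (ε * y j - x j)) * (x k + t * (ε * y k - x k)) =
      ((1-t)^2 * (1 + x j * x k) + (1 - (1-t)^2))
      + t * (1-t) * ε * (x j * y k + x k * y j) + t^2 * ε^2 * (y j * y k) := by
    ring
  have hA : c ≤ (1-t)^2 * (1 + x j * x k) + (1 - (1-t)^2) := by
    nlinarith [mul_nonneg (sq_nonneg (1-t)) (by linarith [hcle j k] : (0:ℝ) ≤ 1 + x j * x k - c),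
      mul_nonneg (by nlinarith : (0:ℝ) ≤ 1 - (1-t)^2) (by linarith : (0:ℝ) ≤ 1 - c)]
  have hS : -(2 * M * Y) ≤ x j * y k + x k * y j := by
    have h1 : -M * y k ≤ x j * y k := mul_le_mul_of_nonneg_right haM.1 hq0.le
    have h2 : -M * y j ≤ x k * y j := mul_le_mul_of_nonneg_right hbM.1 hp0.le
    have h3 : M * y k ≤ M * Y := mul_le_mul_of_nonneg_left hqY hM0
    have h4 : M * y j ≤ M * Y := mul_le_mul_of_nonneg_left hpY hM0
    linarith
  have htt : t * (1 - t) ≤ 1 := by nlinarith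
  have htt0 : 0 ≤ t * (1 - t) := mul_nonneg ht0 (by linarith)
  have hB : -(ε * (2 * M * Y)) ≤ t * (1-t) * ε * (x j * y k + x k * y j) := by
    nlinarith [mul_nonneg (mul_nonneg htt0 hε.le)
        (by linarith : (0:ℝ) ≤ x j * y k + x k * y j + 2 * M * Y),
      mul_nonneg (mul_nonneg (by linarith : (0:ℝ) ≤ 1 - t * (1-t)) hε.le)
        (by positivity : (0:ℝ) ≤ 2 * M * Y)]
  have hC : 0 ≤ t^2 * ε^2 * (y j * y k) := by positivity
  rw [hid]
  linarith [hA, hB, hC, hεc, hε]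
end

section
/- Suppose J ⊂ ℝ is an interval containing the origin in its interior, and Λ : J − J → ℝ is Lebesgue measurable, where J − J is the Minkowski difference {x − y : x, y ∈ J}. The following are equivalent: (1) the nonzero-locus {t ∈ J − J : Λ(t) ≠ 0} is an interval I ⊆ J − J, Λ > 0 on I, and log Λ is concave on I; (2) the Toeplitz kernel T_Λ : J × J → ℝ, (x,y) ↦ Λ(x−y), is TN_2, i.e., Λ ≥ 0 on J − J and for all x₁ < x₂ in J and y₁ < y₂ in J, det ((Λ(x_j − y_k))_{j,k=1}^2) ≥ 0. -/
/-!
(1) ⇒ (2): for `x₁ < x₂` and `y₁ < y₂` the two diagonal differences `x₁ - y₁`, `x₂ - y₂` lie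
between the antidiagonal ones `x₁ - y₂ ≤ x₂ - y₁` and have the same sum, so concavity of `log Λ`
gives the `2 × 2` inequality.

(2) ⇒ (1): a suitable choice of four points of `J` turns a `2 × 2` minor into
`Λ c * Λ d ≤ Λ a * Λ (c + d - a)` for `c ≤ a ≤ d` whenever `a` and `c + d - a` have the same
sign. This makes the support an interval (through `0` if it changes sign) and `log Λ` midpoint
concave on it. A measurable midpoint-concave function is concave (Sierpiński): it is `≥ -n` off a
set of small measure, so every point near a given one is the midpoint of two such points; being
locally bounded below it is continuous by a halving argument, and continuity upgrades concavity
at dyadic points to concavity.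
-/

open Set
open scoped Pointwise

open Filter Topology MeasureTheory Metric

def MidpointConcaveOn (s : Set ℝ) (g : ℝ → ℝ) : Prop :=
  ∀ x ∈ s, ∀ y ∈ s, g x + g y ≤ 2 * g ((x + y) / 2)

lemma exists_mem_and_two_mul_sub_mem {E : Set ℝ} {c r : ℝ}
    (h : volume (closedBall c r \ E) < ENNReal.ofReal r) : ∃ x ∈ E, 2 * c - x ∈ E := by
  by_contra! hE
  -- otherwise `closedBall c r` is covered by `B` and its reflection in `c`
  set B := closedBall c r \ E
  have hr : 0 ≤ r := ENNReal.ofReal_pos.1 (pos_of_gt h) |>.le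
  have hcover : closedBall c r ⊆ B ∪ (fun x => 2 * c - x) ⁻¹' B := by
    intro x hx
    by_cases hxE : x ∈ E
    · refine Or.inr ⟨?_, hE x hxE⟩
      rw [mem_closedBall, Real.dist_eq] at hx ⊢
      rwa [show 2 * c - x - c = -(x - c) by ring, abs_neg]
    · exact Or.inl ⟨hx, hxE⟩
  have hreflect : volume ((fun x => 2 * c - x) ⁻¹' B) = volume B :=
    (Measure.measurePreserving_sub_left volume (2 * c)).measure_preimage_equiv
      (f := MeasurableEquiv.subLeft (2 * c)) B
  have : volume (closedBall c r) < volume (closedBall c r) :=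
    calc volume (closedBall c r) ≤ volume B + volume B :=
          (measure_mono hcover).trans ((measure_union_le _ _).trans_eq (by rw [hreflect]))
      _ < ENNReal.ofReal r + ENNReal.ofReal r := ENNReal.add_lt_add h h
      _ = volume (closedBall c r) := by
          rw [Real.volume_closedBall, ← ENNReal.ofReal_add hr hr, two_mul]
  exact lt_irrefl _ this

/-- The chord of `g` over `[x, z]` lies below the graph at `y`, cleared of denominators. -/
def ChordLE (g : ℝ → ℝ) (x z y : ℝ) : Prop :=
  (z - y) * g x + (y - x) * g z ≤ (z - x) * g y

namespace MidpointConcaveOn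

variable {s : Set ℝ} {g : ℝ → ℝ}

lemma mono {t : Set ℝ} (h : MidpointConcaveOn s g) (hts : t ⊆ s) : MidpointConcaveOn t g :=
  fun x hx y hy => h x (hts hx) y (hts hy)

lemma bddBelow_image_ball (h : MidpointConcaveOn s g) (hs : MeasurableSet s)
    (hg : Measurable (s.domRestrict g)) {w ρ : ℝ} (hρ : 0 < ρ) (hball : closedBall w ρ ⊆ s) :
    BddBelow (g '' ball w (ρ / 2)) := by
  -- some `A n` has measure `< ρ / 2`; then each `c ∈ ball w (ρ / 2)` is the midpoint of two
  -- points of `closedBall w ρ \ A n`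
  set A : ℕ → Set ℝ := fun n => {x ∈ closedBall w ρ | g x < -n}
  have hA_meas : ∀ n, MeasurableSet (A n) := by
    intro n
    have : A n = closedBall w ρ ∩ Subtype.val '' (s.domRestrict g ⁻¹' Iio (-n)) := by
      ext x
      constructor
      · rintro ⟨hx, hgx⟩
        exact ⟨hx, ⟨x, hball hx⟩, hgx, rfl⟩
      · rintro ⟨hx, ⟨y, hy, rfl⟩⟩
        exact ⟨hx, hy⟩
    rw [this]
    exact measurableSet_closedBall.inter (hs.subtype_image (hg measurableSet_Iio))
  have hA_anti : Antitone A := fun m n hmn x hx =>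
    ⟨hx.1, hx.2.trans_le (neg_le_neg (Nat.cast_le.2 hmn))⟩
  have hA_empty : ⋂ n, A n = ∅ := by
    refine eq_empty_of_forall_notMem fun x hx => ?_
    obtain ⟨n, hn⟩ := exists_nat_ge (-g x)
    exact (mem_iInter.1 hx n).2.not_ge (by linarith)
  have hA_fin : volume (A 0) ≠ ⊤ :=
    ((measure_mono (sep_subset _ _)).trans_lt measure_closedBall_lt_top).ne
  have hlim : Tendsto (fun n => volume (A n)) atTop (𝓝 0) := by
    simpa [hA_empty, Function.comp_def] using
      tendsto_measure_iInter_atTop (fun n => (hA_meas n).nullMeasurableSet) hA_anti ⟨0, hA_fin⟩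
  obtain ⟨n, hn⟩ :=
    (hlim.eventually (gt_mem_nhds (ENNReal.ofReal_pos.2 (half_pos hρ)))).exists
  refine ⟨-n, ?_⟩
  rintro _ ⟨c, hc, rfl⟩
  have hcw : closedBall c (ρ / 2) ⊆ closedBall w ρ :=
    closedBall_subset_closedBall' (by linarith [mem_ball.1 hc])
  obtain ⟨x, hx, hx'⟩ := exists_mem_and_two_mul_sub_mem
    (E := {x ∈ closedBall w ρ | -n ≤ g x}) (c := c) (r := ρ / 2) <| by
    refine lt_of_le_of_lt (measure_mono fun y hy => ?_) hn
    exact ⟨hcw hy.1, not_le.1 fun hgy => hy.2 ⟨hcw hy.1, hgy⟩⟩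
  have := h x (hball hx.1) _ (hball hx'.1)
  rw [show (x + (2 * c - x)) / 2 = c by ring] at this
  linarith [hx.2, hx'.2]

lemma continuousAt {w ρ : ℝ} (h : MidpointConcaveOn (ball w ρ) g) (hρ : 0 < ρ)
    (hbdd : BddBelow (g '' ball w ρ)) : ContinuousAt g w := by
  obtain ⟨m, hm⟩ := hbdd
  have hmem : ∀ {t : ℝ}, |t| < ρ → w + t ∈ ball w ρ := fun ht => by
    simpa [mem_ball, Real.dist_eq] using ht
  have hw : w ∈ ball w ρ := mem_ball_self hρ
  have hshrink : ∀ {n : ℕ} {t : ℝ}, 2 ^ n * |t| < ρ → w + t ∈ ball w ρ := fun ht =>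
    hmem (lt_of_le_of_lt (le_mul_of_one_le_left (abs_nonneg _) (one_le_pow₀ one_le_two)) ht)
  -- `w + t` is the midpoint of `w` and `w + 2 * t`, so the drop of `g` below `g w` halves
  have hdrop : ∀ n : ℕ, ∀ t, 2 ^ n * |t| < ρ → g w - g (w + t) ≤ (g w - m) / 2 ^ n := by
    intro n
    induction n with
    | zero =>
      intro t ht
      rw [pow_zero, one_mul] at ht
      linarith [hm ⟨w + t, hmem ht, rfl⟩]
    | succ n ih =>
      intro t ht
      have h2t : 2 ^ n * |2 * t| < ρ := by
        rw [abs_mul, abs_two, ← mul_assoc, ← pow_succ]; exact ht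
      have hmid := h w hw (w + 2 * t) (hshrink h2t)
      rw [show (w + (w + 2 * t)) / 2 = w + t by ring] at hmid
      rw [pow_succ, ← div_div]
      linarith [ih (2 * t) h2t]
  have hclose : ∀ n : ℕ, ∀ t, 2 ^ n * |t| < ρ → |g (w + t) - g w| ≤ (g w - m) / 2 ^ n := by
    intro n t ht
    have ht' : 2 ^ n * |-t| < ρ := by rwa [abs_neg]
    have hmid := h (w + t) (hshrink ht) (w + -t) (hshrink ht')
    rw [show (w + t + (w + -t)) / 2 = w by ring] at hmid
    rw [abs_le]
    constructor <;> linarith [hdrop n t ht, hdrop n (-t) ht']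
  have hsmall : Tendsto (fun n : ℕ => (g w - m) / 2 ^ n) atTop (𝓝 0) :=
    tendsto_const_nhds.div_atTop (tendsto_pow_atTop_atTop_of_one_lt one_lt_two)
  refine Metric.continuousAt_iff.2 fun ε hε => ?_
  obtain ⟨n, hn⟩ := (hsmall.eventually (gt_mem_nhds hε)).exists
  refine ⟨ρ / 2 ^ n, by positivity, fun {x} hx => ?_⟩
  rw [Real.dist_eq, lt_div_iff₀' (by positivity)] at hx
  have := hclose n (x - w) hx
  rw [add_sub_cancel] at this
  exact (Real.dist_eq _ _).trans_lt (this.trans_lt hn)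

lemma continuousAt_of_mem_nhds (h : MidpointConcaveOn s g) (hs : MeasurableSet s)
    (hg : Measurable (s.domRestrict g)) {w : ℝ} (hw : s ∈ 𝓝 w) : ContinuousAt g w := by
  obtain ⟨ρ, hρ, hball⟩ := nhds_basis_closedBall.mem_iff.1 hw
  refine (h.mono ?_).continuousAt (half_pos hρ) (h.bddBelow_image_ball hs hg hρ hball)
  exact ball_subset_closedBall.trans ((closedBall_subset_closedBall (half_le_self hρ.le)).trans hball)

lemma chordLE_midpoint {x z : ℝ} (h : MidpointConcaveOn (Icc x z) g) (hxz : x ≤ z)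
    {y₁ y₂ : ℝ} (hy₁ : y₁ ∈ Icc x z) (hy₂ : y₂ ∈ Icc x z) (h₁ : ChordLE g x z y₁)
    (h₂ : ChordLE g x z y₂) : ChordLE g x z ((y₁ + y₂) / 2) := by
  have := mul_le_mul_of_nonneg_left (h y₁ hy₁ y₂ hy₂) (sub_nonneg.2 hxz)
  unfold ChordLE at *
  linear_combination (h₁ + h₂ + this) / 2

lemma chordLE_dyadic {x z : ℝ} (h : MidpointConcaveOn (Icc x z) g) (hxz : x ≤ z) (n : ℕ) :
    ∀ k : ℕ, k ≤ 2 ^ n → ChordLE g x z (x + k / 2 ^ n * (z - x)) := by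
  induction n with
  | zero =>
    intro k hk
    interval_cases k <;> norm_num [ChordLE]
  | succ n ih =>
    have hmem : ∀ k : ℕ, k ≤ 2 ^ n → x + k / 2 ^ n * (z - x) ∈ Icc x z := by
      intro k hk
      have hk' : (k : ℝ) / 2 ^ n ≤ 1 := div_le_one_of_le₀ (by exact_mod_cast hk) (by positivity)
      constructor <;> nlinarith [show (0 : ℝ) ≤ k / 2 ^ n by positivity]
    intro k hk
    obtain ⟨j, rfl | rfl⟩ := Nat.even_or_odd' k
    · have e : ((2 * j : ℕ) : ℝ) / 2 ^ (n + 1) = j / 2 ^ n := by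
        push_cast; rw [pow_succ]; field_simp
      rw [e]
      exact ih j (by omega)
    · have e : x + ((2 * j + 1 : ℕ) : ℝ) / 2 ^ (n + 1) * (z - x) =
          ((x + j / 2 ^ n * (z - x)) + (x + ((j + 1 : ℕ) : ℝ) / 2 ^ n * (z - x))) / 2 := by
        push_cast; rw [pow_succ]; field_simp; ring
      rw [e]
      exact chordLE_midpoint h hxz (hmem j (by omega)) (hmem (j + 1) (by omega))
        (ih j (by omega)) (ih (j + 1) (by omega))

theorem concaveOn (h : MidpointConcaveOn s g) (hs : s.OrdConnected)
    (hg : Measurable (s.domRestrict g)) : ConcaveOn ℝ s g := by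
  refine concaveOn_of_slope_anti_adjacent hs.convex fun {x y z} hx hz hxy hyz => ?_
  rw [div_le_div_iff₀ (sub_pos.2 hyz) (sub_pos.2 hxy)]
  suffices ChordLE g x z y by unfold ChordLE at this; linear_combination this
  have hIcc : Icc x z ⊆ s := hs.out hx hz
  have hcont : ContinuousAt g y :=
    h.continuousAt_of_mem_nhds hs.measurableSet hg (mem_of_superset (Icc_mem_nhds hxy hyz) hIcc)
  set q := (y - x) / (z - x)
  have hxz : 0 < z - x := by linarith
  have hq₀ : 0 ≤ q := div_nonneg (by linarith) hxz.le
  have hq₁ : q ≤ 1 := (div_le_one hxz).2 (by linarith)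
  have hy : x + q * (z - x) = y := by simp only [q]; field_simp; ring
  set p : ℕ → ℝ := fun n => x + (⌊q * 2 ^ n⌋₊ : ℝ) / 2 ^ n * (z - x)
  have hp : Tendsto p atTop (𝓝 y) := by
    rw [← hy]
    exact tendsto_const_nhds.add (((tendsto_nat_floor_mul_div_atTop hq₀).comp
      (tendsto_pow_atTop_atTop_of_one_lt one_lt_two)).mul_const _)
  have hchord : ∀ n, ChordLE g x z (p n) := fun n =>
    chordLE_dyadic (h.mono hIcc) (hxy.trans hyz).le n _ <| Nat.floor_le_of_le <| by
      push_cast; nlinarith [show (0 : ℝ) < 2 ^ n by positivity]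
  exact le_of_tendsto_of_tendsto' (((tendsto_const_nhds.sub hp).mul_const _).add
    ((hp.sub_const _).mul_const _)) ((hcont.tendsto.comp hp).const_mul _) hchord

end MidpointConcaveOn

theorem ConcaveOn.add_le_add_of_mem_Icc {s : Set ℝ} {f : ℝ → ℝ} (hf : ConcaveOn ℝ s f)
    {c a d : ℝ} (hc : c ∈ s) (hd : d ∈ s) (ha : a ∈ Icc c d) :
    f c + f d ≤ f a + f (c + d - a) := by
  obtain hcd | hcd := (ha.1.trans ha.2).eq_or_lt
  · obtain rfl : a = c := le_antisymm (hcd ▸ ha.2) ha.1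
    simp
  set θ := (d - a) / (d - c)
  have hθ₀ : 0 ≤ θ := div_nonneg (by linarith [ha.2]) (by linarith)
  have hθ₁ : 0 ≤ 1 - θ := by
    rw [sub_nonneg]; exact (div_le_one (by linarith)).2 (by linarith [ha.1])
  have h₁ := hf.2 hc hd hθ₀ hθ₁ (add_sub_cancel θ 1)
  have h₂ := hf.2 hc hd hθ₁ hθ₀ (sub_add_cancel 1 θ)
  have e₁ : θ • c + (1 - θ) • d = a := by simp only [smul_eq_mul, θ]; field_simp; ring
  have e₂ : (1 - θ) • c + θ • d = c + d - a := by simp only [smul_eq_mul, θ]; field_simp; ring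
  rw [e₁] at h₁
  rw [e₂] at h₂
  simp only [smul_eq_mul] at h₁ h₂
  linear_combination h₁ + h₂

theorem mul_le_mul_of_concaveOn_log {s : Set ℝ} {f : ℝ → ℝ} (hpos : ∀ t ∈ s, 0 < f t)
    (hf : ConcaveOn ℝ s fun t => Real.log (f t)) {c a d : ℝ} (hc : c ∈ s) (hd : d ∈ s)
    (ha : a ∈ Icc c d) : f c * f d ≤ f a * f (c + d - a) := by
  have hIcc : Icc c d ⊆ s := hf.1.ordConnected.out hc hd
  have hb : c + d - a ∈ Icc c d := ⟨by linarith [ha.2], by linarith [ha.1]⟩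
  rw [← Real.log_le_log_iff (mul_pos (hpos c hc) (hpos d hd))
    (mul_pos (hpos a (hIcc ha)) (hpos _ (hIcc hb))), Real.log_mul (hpos c hc).ne' (hpos d hd).ne',
    Real.log_mul (hpos a (hIcc ha)).ne' (hpos _ (hIcc hb)).ne']
  exact hf.add_le_add_of_mem_Icc hc hd ha

theorem Set.OrdConnected.sub {s t : Set ℝ} (hs : s.OrdConnected) (ht : t.OrdConnected) :
    (s - t).OrdConnected :=
  (hs.convex.sub ht.convex).ordConnected

def ToeplitzTN2 (J : Set ℝ) (Λ : ℝ → ℝ) : Prop :=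
  (∀ x ∈ J, ∀ y ∈ J, 0 ≤ Λ (x - y)) ∧
  ∀ x₁ ∈ J, ∀ x₂ ∈ J, ∀ y₁ ∈ J, ∀ y₂ ∈ J, x₁ < x₂ → y₁ < y₂ →
    0 ≤ Λ (x₁ - y₁) * Λ (x₂ - y₂) - Λ (x₁ - y₂) * Λ (x₂ - y₁)

theorem toeplitzTN2_of_concaveOn_log {J : Set ℝ} {Λ : ℝ → ℝ}
    (hpos : ∀ t ∈ J - J, Λ t ≠ 0 → 0 < Λ t)
    (hconc : ConcaveOn ℝ {t ∈ J - J | Λ t ≠ 0} fun t => Real.log (Λ t)) :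
    ToeplitzTN2 J Λ := by
  have hnn : ∀ t ∈ J - J, 0 ≤ Λ t := fun t ht =>
    (eq_or_ne (Λ t) 0).elim (fun h => h.ge) fun h => (hpos t ht h).le
  refine ⟨fun x hx y hy => hnn _ (sub_mem_sub hx hy),
    fun x₁ hx₁ x₂ hx₂ y₁ hy₁ y₂ hy₂ hx hy => ?_⟩
  have hdiag := mul_nonneg (hnn _ (sub_mem_sub hx₁ hy₁)) (hnn _ (sub_mem_sub hx₂ hy₂))
  rw [sub_nonneg]
  by_cases hc : Λ (x₁ - y₂) = 0
  · rwa [hc, zero_mul]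
  by_cases hd : Λ (x₂ - y₁) = 0
  · rwa [hd, mul_zero]
  have := mul_le_mul_of_concaveOn_log (fun t ht => hpos t ht.1 ht.2) hconc
    ⟨sub_mem_sub hx₁ hy₂, hc⟩ ⟨sub_mem_sub hx₂ hy₁, hd⟩
    (a := x₁ - y₁) ⟨by linarith, by linarith⟩
  rwa [show x₁ - y₂ + (x₂ - y₁) - (x₁ - y₁) = x₂ - y₂ by ring] at this

namespace ToeplitzTN2

variable {J : Set ℝ} {Λ : ℝ → ℝ}

lemma nonneg (h : ToeplitzTN2 J Λ) {t : ℝ} (ht : t ∈ J - J) : 0 ≤ Λ t := by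
  obtain ⟨x, hx, y, hy, rfl⟩ := ht
  exact h.1 x hx y hy

lemma antidiag_le_diag (h : ToeplitzTN2 J Λ) {x₁ x₂ y₁ y₂ : ℝ} (hx₁ : x₁ ∈ J) (hx₂ : x₂ ∈ J)
    (hy₁ : y₁ ∈ J) (hy₂ : y₂ ∈ J) (hx : x₁ ≤ x₂) (hy : y₁ ≤ y₂) :
    Λ (x₁ - y₂) * Λ (x₂ - y₁) ≤ Λ (x₁ - y₁) * Λ (x₂ - y₂) := by
  obtain rfl | hx := hx.eq_or_lt
  · rw [mul_comm]
  obtain rfl | hy := hy.eq_or_lt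
  · rfl
  exact sub_nonneg.1 (h.2 x₁ hx₁ x₂ hx₂ y₁ hy₁ y₂ hy₂ hx hy)

lemma mul_le_mul_of_mul_nonneg (h : ToeplitzTN2 J Λ) (hJ : J.OrdConnected) {c a d : ℝ}
    (hc : c ∈ J - J) (hd : d ∈ J - J) (hca : c ≤ a) (had : a ≤ d)
    (hab : 0 ≤ a * (c + d - a)) : Λ c * Λ d ≤ Λ a * Λ (c + d - a) := by
  -- the four points span an interval of length `d` (resp. `-c`) with endpoints given by `d ∈ J - J`
  -- (resp. `c ∈ J - J`); this needs `a` and `c + d - a` of the same sign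
  rcases mul_nonneg_iff.1 hab with ⟨ha, hb⟩ | ⟨ha, hb⟩
  · obtain ⟨p, hp, q, hq, rfl⟩ := hd
    have := h.antidiag_le_diag (x₁ := q + a) (y₂ := q + (a - c))
      (hJ.out hq hp ⟨by linarith, by linarith⟩) hp hq (hJ.out hq hp ⟨by linarith, by linarith⟩)
      (by linarith) (by linarith)
    convert this using 3 <;> ring
  · obtain ⟨p, hp, q, hq, rfl⟩ := hc
    have := h.antidiag_le_diag (x₂ := p + (d - a)) (y₁ := p - a) hp
      (hJ.out hp hq ⟨by linarith, by linarith⟩) (hJ.out hp hq ⟨by linarith, by linarith⟩) hq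
      (by linarith) (by linarith)
    convert this using 3 <;> ring

lemma pos_of_mul_nonneg (h : ToeplitzTN2 J Λ) (hJ : J.OrdConnected) {c z d : ℝ}
    (hc : c ∈ J - J) (hd : d ∈ J - J) (hcz : c ≤ z) (hzd : z ≤ d) (hz : 0 ≤ z * (c + d - z))
    (hΛc : 0 < Λ c) (hΛd : 0 < Λ d) : 0 < Λ z := by
  refine (h.nonneg (hJ.sub hJ |>.out hc hd ⟨hcz, hzd⟩)).lt_of_ne' fun hΛz => ?_
  have := h.mul_le_mul_of_mul_nonneg hJ hc hd hcz hzd hz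
  rw [hΛz, zero_mul] at this
  exact (mul_pos hΛc hΛd).not_ge this

lemma ordConnected_support (h : ToeplitzTN2 J Λ) (hJ : J.OrdConnected) :
    {t ∈ J - J | Λ t ≠ 0}.OrdConnected := by
  have hJJ : (J - J).OrdConnected := hJ.sub hJ
  refine ⟨fun c ⟨hc, hΛc⟩ d ⟨hd, hΛd⟩ z ⟨hcz, hzd⟩ => ⟨hJJ.out hc hd ⟨hcz, hzd⟩, ?_⟩⟩
  replace hΛc := (h.nonneg hc).lt_of_ne' hΛc
  replace hΛd := (h.nonneg hd).lt_of_ne' hΛd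
  by_cases hz : 0 ≤ z * (c + d - z)
  · exact (h.pos_of_mul_nonneg hJ hc hd hcz hzd hz hΛc hΛd).ne'
  -- `z` and `c + d - z` have opposite signs, so the support crosses `0` and `Λ 0 > 0`
  have hc₀ : c < 0 := by
    by_contra! hc₀
    exact hz (mul_nonneg (by linarith) (by linarith))
  have hd₀ : 0 < d := by
    by_contra! hd₀
    exact hz (mul_nonneg_of_nonpos_of_nonpos (by linarith) (by linarith))
  have h₀ : (0 : ℝ) ∈ J - J := hJJ.out hc hd ⟨hc₀.le, hd₀.le⟩
  have hΛ₀ := h.pos_of_mul_nonneg hJ hc hd hc₀.le hd₀.le (by simp) hΛc hΛd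
  rcases le_total 0 z with hz₀ | hz₀
  · exact (h.pos_of_mul_nonneg hJ h₀ hd hz₀ hzd
      (mul_nonneg hz₀ (by linarith)) hΛ₀ hΛd).ne'
  · exact (h.pos_of_mul_nonneg hJ hc h₀ hcz hz₀
      (mul_nonneg_of_nonpos_of_nonpos hz₀ (by linarith)) hΛc hΛ₀).ne'

lemma mul_le_sq_midpoint (h : ToeplitzTN2 J Λ) (hJ : J.OrdConnected) {x y : ℝ}
    (hx : x ∈ J - J) (hy : y ∈ J - J) : Λ x * Λ y ≤ Λ ((x + y) / 2) ^ 2 := by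
  wlog hxy : x ≤ y generalizing x y
  · rw [mul_comm, add_comm]
    exact this hy hx (le_of_not_ge hxy)
  have hb : x + y - (x + y) / 2 = (x + y) / 2 := by ring
  have := h.mul_le_mul_of_mul_nonneg hJ hx hy (a := (x + y) / 2) (by linarith) (by linarith)
    (by rw [hb]; exact mul_self_nonneg _)
  rwa [hb, ← sq] at this

lemma concaveOn_log (h : ToeplitzTN2 J Λ) (hJ : J.OrdConnected)
    (hmeas : Measurable ((J - J).domRestrict Λ)) :
    ConcaveOn ℝ {t ∈ J - J | Λ t ≠ 0} fun t => Real.log (Λ t) := by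
  have hS := h.ordConnected_support hJ
  have hpos : ∀ t ∈ {t ∈ J - J | Λ t ≠ 0}, 0 < Λ t := fun t ht => (h.nonneg ht.1).lt_of_ne' ht.2
  refine MidpointConcaveOn.concaveOn (fun x hx y hy => ?_) hS
    (Real.measurable_log.comp (hmeas.comp (measurable_inclusion (sep_subset _ _))))
  calc Real.log (Λ x) + Real.log (Λ y) = Real.log (Λ x * Λ y) :=
        (Real.log_mul (hpos x hx).ne' (hpos y hy).ne').symm
    _ ≤ Real.log (Λ ((x + y) / 2) ^ 2) :=
        Real.log_le_log (mul_pos (hpos x hx) (hpos y hy)) (h.mul_le_sq_midpoint hJ hx.1 hy.1)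
    _ = 2 * Real.log (Λ ((x + y) / 2)) := by rw [Real.log_pow]; norm_num

end ToeplitzTN2

theorem stmt18_general (J : Set ℝ) (hJ : J.OrdConnected)
    (Λ : ℝ → ℝ) (hmeas : Measurable ((J - J).restrict Λ)) :
    (({t ∈ J - J | Λ t ≠ 0}).OrdConnected ∧
     (∀ t ∈ J - J, Λ t ≠ 0 → 0 < Λ t) ∧
     ConcaveOn ℝ {t ∈ J - J | Λ t ≠ 0} (fun t => Real.log (Λ t))) ↔
    ((∀ x ∈ J, ∀ y ∈ J, 0 ≤ Λ (x - y)) ∧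
     (∀ x₁ ∈ J, ∀ x₂ ∈ J, ∀ y₁ ∈ J, ∀ y₂ ∈ J, x₁ < x₂ → y₁ < y₂ →
       0 ≤ Λ (x₁ - y₁) * Λ (x₂ - y₂) - Λ (x₁ - y₂) * Λ (x₂ - y₁))) :=
  ⟨fun ⟨_, hpos, hconc⟩ => toeplitzTN2_of_concaveOn_log hpos hconc,
    fun (h : ToeplitzTN2 J Λ) => ⟨h.ordConnected_support hJ,
      fun _ ht hne => (h.nonneg ht).lt_of_ne' hne, h.concaveOn_log hJ hmeas⟩⟩

theorem stmt18 (J : Set ℝ) (hJ : J.OrdConnected) (h0 : (0 : ℝ) ∈ interior J)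
    (Λ : ℝ → ℝ) (hmeas : Measurable ((J - J).restrict Λ)) :
    (({t ∈ J - J | Λ t ≠ 0}).OrdConnected ∧
     (∀ t ∈ J - J, Λ t ≠ 0 → 0 < Λ t) ∧
     ConcaveOn ℝ {t ∈ J - J | Λ t ≠ 0} (fun t => Real.log (Λ t))) ↔
    ((∀ x ∈ J, ∀ y ∈ J, 0 ≤ Λ (x - y)) ∧
     (∀ x₁ ∈ J, ∀ x₂ ∈ J, ∀ y₁ ∈ J, ∀ y₂ ∈ J, x₁ < x₂ → y₁ < y₂ →
       0 ≤ Λ (x₁ - y₁) * Λ (x₂ - y₂) - Λ (x₁ - y₂) * Λ (x₂ - y₁))) :=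
  stmt18_general J hJ Λ hmeas
end
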